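/- arXiv:2202.07149 — 6 statements merged into one kernel-verified Lean document; each statement's English description precedes it below -/
import Mathlib

section
/- For every integer n ≥ 14, writing n = 4m + c with integers m ≥ 0 and 2 ≤ c ≤ 5, there exists a C_3^{(3)}-saturated 3-uniform hypergraph on n vertices with exactly 6(m+2−c) + 9(c−2) edges (equivalently, 6m + 3c − 6 edges; this equals 3n/2 when n ≡ 0 (mod 4), 3n/2 + 3/2 when n ≡ 1 (mod 4), 3n/2 − 3 when n ≡ 2 (mod 4), and 3n/2 − 3/2 when n ≡ 3 (mod 4)). -/
open Finset

variable {V : Type*}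

/-- `E` is the edge set of a 3-uniform hypergraph: every edge has 3 vertices. -/
def IsUniform3 [DecidableEq V] (E : Finset (Finset V)) : Prop :=
  ∀ e ∈ E, e.card = 3

/-- `E` contains a copy of the loose cycle `C₃⁽³⁾`: three edges whose pairwise
intersections are three distinct single vertices, with empty triple intersection. -/
def HasC3 [DecidableEq V] (E : Finset (Finset V)) : Prop :=
  ∃ e₁ ∈ E, ∃ e₂ ∈ E, ∃ e₃ ∈ E, ∃ a b c : V,
    e₁ ∩ e₂ = {a} ∧ e₂ ∩ e₃ = {b} ∧ e₁ ∩ e₃ = {c} ∧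
    a ≠ b ∧ b ≠ c ∧ a ≠ c ∧ e₁ ∩ e₂ ∩ e₃ = ∅

/-- `E` is a `C₃⁽³⁾`-saturated 3-uniform hypergraph: it is 3-uniform, `C₃⁽³⁾`-free,
and adding any non-edge triple creates a copy of `C₃⁽³⁾`. -/
def IsSat3 [DecidableEq V] (E : Finset (Finset V)) : Prop :=
  IsUniform3 E ∧ ¬ HasC3 E ∧
    ∀ e : Finset V, e.card = 3 → e ∉ E → HasC3 (insert e E)

/-- The degree of a vertex: the number of edges containing it. -/
def deg [DecidableEq V] (E : Finset (Finset V)) (v : V) : ℕ :=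
  (E.filter fun e => v ∈ e).card

/-- The codegree of a pair of vertices: number of edges containing both. -/
def codeg [DecidableEq V] (E : Finset (Finset V)) (u v : V) : ℕ :=
  (E.filter fun e => u ∈ e ∧ v ∈ e).card

/-- `u` and `v` are distinct and share an edge (`v ∈ N(u)`). -/
def Adj [DecidableEq V] (E : Finset (Finset V)) (u v : V) : Prop :=
  u ≠ v ∧ ∃ e ∈ E, u ∈ e ∧ v ∈ e

/-- `e₁, e₂` form a `u,v`-link: a loose path of two edges from `u` to `v`. -/
def IsLink [DecidableEq V] (E : Finset (Finset V)) (u v : V) (e₁ e₂ : Finset V) : Prop :=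
  e₁ ∈ E ∧ e₂ ∈ E ∧ u ∈ e₁ ∧ v ∈ e₂ ∧ u ∉ e₂ ∧ v ∉ e₁ ∧
    ∃ w, w ∉ ({u, v} : Finset V) ∧ e₁ ∩ e₂ = {w}

/-- `uv` is a good pair: there exists a `u,v`-link. -/
def GoodPair [DecidableEq V] (E : Finset (Finset V)) (u v : V) : Prop :=
  ∃ e₁ e₂, IsLink E u v e₁ e₂


/-!
Take two hubs `x`, `y` and split the other vertices into `m` blocks `Bᵢ` of size 4 or 5, each
with two marked vertices `aᵢ ≠ bᵢ`; let `Lᵢ = Bᵢ \ {aᵢ, bᵢ}`. The edges are `{x, aᵢ, v}` and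
`{y, bᵢ, v}` for `v ∈ Bᵢ`, and `Lᵢ` itself when it has three vertices. A block then carries
`3 |Bᵢ| - 6` edges, so `c - 2` blocks of size 5 and the others of size 4 give `6m + 3c - 6` edges
on `4m + c` vertices.

Every edge lies in `{x, y} ∪ Bᵢ` for a single `i` and contains at most one hub. Two edges of a
loose triangle through the same hub meet the third edge inside one block `Bᵢ`, hence both
contain `aᵢ` (or `bᵢ`) besides the hub. If an edge of the triangle avoids the hubs, it is some
`Lᵢ`, and the other two are of the form `{x, aᵢ, r}` or `{y, bᵢ, q}` with `q ≠ r` in `Lᵢ`, which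
cannot meet in a single third vertex. With only two hubs, no loose triangle remains.
Conversely, a missing triple is closed into a loose triangle by two edges through the hubs,
chosen according to the hubs and blocks its vertices lie in. Exchanging `(x, a)` with `(y, b)`
is a symmetry of the construction, which halves the case analysis.
-/

namespace Finset

variable [DecidableEq V]

theorem exists_eq_triple_of_card_eq_three {e : Finset V} {x : V} (he : #e = 3) (hx : x ∈ e) :
    ∃ u v, u ≠ v ∧ u ≠ x ∧ v ≠ x ∧ e = {x, u, v} := by
  obtain ⟨u, v, huv, hsplit⟩ := card_eq_two.1 (by rw [card_erase_of_mem hx, he] : #(e.erase x) = 2)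
  have hu : u ∈ e.erase x := by simp [hsplit]
  have hv : v ∈ e.erase x := by simp [hsplit]
  exact ⟨u, v, huv, ne_of_mem_erase hu, ne_of_mem_erase hv, by rw [← hsplit, insert_erase hx]⟩

end Finset

section LooseTriangle

variable [DecidableEq V]

def IsLooseTriangle (f g h : Finset V) : Prop :=
  ∃ p q r : V, f ∩ g = {p} ∧ g ∩ h = {q} ∧ f ∩ h = {r} ∧ p ≠ q ∧ q ≠ r ∧ p ≠ r

theorem IsLooseTriangle.rotate {f g h : Finset V} (hT : IsLooseTriangle f g h) :
    IsLooseTriangle g h f := by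
  obtain ⟨p, q, r, hfg, hgh, hfh, hpq, hqr, hpr⟩ := hT
  exact ⟨q, r, p, hgh, by rw [inter_comm, hfh], by rw [inter_comm, hfg], hqr, hpr.symm, hpq.symm⟩

theorem HasC3.exists_isLooseTriangle {E : Finset (Finset V)} (h : HasC3 E) :
    ∃ f ∈ E, ∃ g ∈ E, ∃ h ∈ E, IsLooseTriangle f g h := by
  obtain ⟨f, hf, g, hg, h, hh, p, q, r, hfg, hgh, hfh, hpq, hqr, hpr, -⟩ := h
  exact ⟨f, hf, g, hg, h, hh, p, q, r, hfg, hgh, hfh, hpq, hqr, hpr⟩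

theorem hasC3_of_nodup {E : Finset (Finset V)} {a b c u v w : V} (h : [a, b, c, u, v, w].Nodup)
    (hab : {a, b, u} ∈ E) (hbc : {b, c, v} ∈ E) (hac : {a, c, w} ∈ E) : HasC3 E := by
  simp only [List.nodup_cons, List.mem_cons, List.not_mem_nil, or_false, List.nodup_nil,
    and_true] at h
  refine ⟨_, hab, _, hbc, _, hac, b, c, a, ?_, ?_, ?_, ?_, ?_, ?_, ?_⟩ <;>
    first
    | (ext z; simp only [mem_inter, mem_insert, mem_singleton, notMem_empty]; grind)
    | grind

end LooseTriangle

structure BlockSetup (V I : Type*) [Fintype V] [DecidableEq V] [DecidableEq I] where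
  x : V
  y : V
  block : V → Option I
  a : I → V
  b : I → V
  x_ne_y : x ≠ y
  block_eq_none : ∀ v, block v = none ↔ v = x ∨ v = y
  block_a : ∀ i, block (a i) = some i
  block_b : ∀ i, block (b i) = some i
  a_ne_b : ∀ i, a i ≠ b i
  four_le_card : ∀ i, 4 ≤ #{v | block v = some i}
  card_le_five : ∀ i, #{v | block v = some i} ≤ 5

namespace BlockSetup

variable {I : Type*} [Fintype V] [DecidableEq V] [DecidableEq I] (S : BlockSetup V I)

def swap : BlockSetup V I where
  x := S.y
  y := S.x
  block := S.block
  a := S.b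
  b := S.a
  x_ne_y := S.x_ne_y.symm
  block_eq_none v := (S.block_eq_none v).trans or_comm
  block_a := S.block_b
  block_b := S.block_a
  a_ne_b i := (S.a_ne_b i).symm
  four_le_card := S.four_le_card
  card_le_five := S.card_le_five

def B (i : I) : Finset V := {v | S.block v = some i}

def L (i : I) : Finset V := S.B i \ {S.a i, S.b i}

def xEdges (i : I) : Finset (Finset V) := ((S.B i).erase (S.a i)).image fun v => {S.x, S.a i, v}

def blockEdges (i : I) : Finset (Finset V) :=
  S.xEdges i ∪ S.swap.xEdges i ∪ (S.L i).powersetCard 3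

def E [Fintype I] : Finset (Finset V) := univ.biUnion S.blockEdges

@[simp] theorem mem_B {v : V} {i : I} : v ∈ S.B i ↔ S.block v = some i := by simp [B]

theorem mem_L {v : V} {i : I} : v ∈ S.L i ↔ S.block v = some i ∧ v ≠ S.a i ∧ v ≠ S.b i := by
  simp [L]

theorem mem_xEdges {e : Finset V} {i : I} :
    e ∈ S.xEdges i ↔ ∃ v, S.block v = some i ∧ v ≠ S.a i ∧ e = {S.x, S.a i, v} := by
  simp only [xEdges, mem_image, mem_erase, mem_B]
  grind

@[simp] theorem block_x : S.block S.x = none := (S.block_eq_none _).2 (.inl rfl)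
@[simp] theorem block_y : S.block S.y = none := (S.block_eq_none _).2 (.inr rfl)

theorem ne_of_block_ne {v w : V} (h : S.block v ≠ S.block w) : v ≠ w := fun hvw => h (hvw ▸ rfl)

theorem exists_block_eq_some {v : V} (hx : v ≠ S.x) (hy : v ≠ S.y) : ∃ i, S.block v = some i :=
  Option.ne_none_iff_exists'.1 fun h => ((S.block_eq_none v).1 h).elim hx hy

theorem exists_block_eq_some_notMem (i : I) {s : Finset V} (hs : #s ≤ 3) :
    ∃ t, S.block t = some i ∧ t ∉ s := by
  have : 4 ≤ #(S.B i) := S.four_le_card i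
  have : #s < #(S.B i) := by omega
  obtain ⟨t, ht, hts⟩ := exists_mem_notMem_of_card_lt_card this
  exact ⟨t, S.mem_B.1 ht, hts⟩

@[simp] theorem swap_x : S.swap.x = S.y := rfl
@[simp] theorem swap_a : S.swap.a = S.b := rfl
@[simp] theorem swap_block : S.swap.block = S.block := rfl
@[simp] theorem swap_swap : S.swap.swap = S := rfl
@[simp] theorem swap_B : S.swap.B = S.B := rfl

@[simp] theorem swap_L : S.swap.L = S.L := by
  funext i; exact congrArg (S.B i \ ·) (pair_comm _ _)

@[simp] theorem swap_blockEdges : S.swap.blockEdges = S.blockEdges := by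
  funext i; simp only [blockEdges, swap_L, swap_swap]; exact congrArg (· ∪ _) (union_comm _ _)

theorem mem_blockEdges {e : Finset V} {i : I} : e ∈ S.blockEdges i ↔
    (∃ v, S.block v = some i ∧ v ≠ S.a i ∧ e = {S.x, S.a i, v}) ∨
    (∃ v, S.block v = some i ∧ v ≠ S.b i ∧ e = {S.y, S.b i, v}) ∨ (e ⊆ S.L i ∧ #e = 3) := by
  simp only [blockEdges, mem_union, mem_xEdges, mem_powersetCard, swap_x, swap_a, swap_block,
    or_assoc]

theorem block_of_mem_blockEdges {e : Finset V} {i : I} (he : e ∈ S.blockEdges i) {v : V}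
    (hv : v ∈ e) : S.block v = none ∨ S.block v = some i := by
  obtain ⟨w, hw, -, rfl⟩ | ⟨w, hw, -, rfl⟩ | ⟨hL, -⟩ := S.mem_blockEdges.1 he
  · simp only [mem_insert, mem_singleton] at hv; grind [block_x, block_a]
  · simp only [mem_insert, mem_singleton] at hv; grind [block_y, block_b]
  · exact .inr (S.mem_L.1 (hL hv)).1

theorem exists_mem_of_mem_blockEdges {e : Finset V} {i : I} (he : e ∈ S.blockEdges i) :
    ∃ v ∈ e, S.block v = some i := by
  obtain ⟨w, -, -, rfl⟩ | ⟨w, -, -, rfl⟩ | ⟨hL, h3⟩ := S.mem_blockEdges.1 he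
  · exact ⟨S.a i, by simp, S.block_a i⟩
  · exact ⟨S.b i, by simp, S.block_b i⟩
  · obtain ⟨v, hv⟩ := card_pos.1 (by omega : 0 < #e)
    exact ⟨v, hv, (S.mem_L.1 (hL hv)).1⟩

theorem card_L_add_two (i : I) : #(S.L i) + 2 = #(S.B i) := by
  have hsub : {S.a i, S.b i} ⊆ S.B i := by simp [insert_subset_iff, S.block_a, S.block_b]
  rw [L, card_sdiff_of_subset hsub, card_pair (S.a_ne_b i)]
  have : 4 ≤ #(S.B i) := S.four_le_card i
  omega

theorem card_L_le_three (i : I) : #(S.L i) ≤ 3 := by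
  have := S.card_L_add_two i
  have : #(S.B i) ≤ 5 := S.card_le_five i
  omega

theorem inter_ne_singleton_of_subset_L {f h : Finset V} {i j : I} (hf : f ⊆ S.L i)
    (hf3 : #f = 3) (hh : h ⊆ S.L j) (hh3 : #h = 3) (r : V) : f ∩ h ≠ {r} := by
  intro hfh
  have hr : r ∈ f ∩ h := by simp [hfh]
  rw [mem_inter] at hr
  obtain rfl : i = j := Option.some_injective _ <|
    (S.mem_L.1 (hf hr.1)).1.symm.trans (S.mem_L.1 (hh hr.2)).1
  have hcard := card_union_add_card_inter f h
  rw [hfh, card_singleton, hf3, hh3] at hcard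
  have := (card_le_card (union_subset hf hh)).trans (S.card_L_le_three i)
  omega

/-! ### The shape of edges -/

section

variable [Fintype I]

@[simp] theorem swap_E : S.swap.E = S.E := by
  simp only [E, swap_blockEdges]

theorem mem_E {e : Finset V} : e ∈ S.E ↔ ∃ i, e ∈ S.blockEdges i := by simp [E]

theorem xEdge_mem {i : I} {v : V} (hv : S.block v = some i) (hva : v ≠ S.a i) :
    {S.x, S.a i, v} ∈ S.E :=
  S.mem_E.2 ⟨i, S.mem_blockEdges.2 (.inl ⟨v, hv, hva, rfl⟩)⟩

theorem yEdge_mem {i : I} {v : V} (hv : S.block v = some i) (hvb : v ≠ S.b i) :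
    {S.y, S.b i, v} ∈ S.E :=
  S.swap_E ▸ S.swap.xEdge_mem hv hvb

theorem mem_E_of_subset_L {e : Finset V} {i : I} (he : e ⊆ S.L i) (hcard : #e = 3) : e ∈ S.E :=
  S.mem_E.2 ⟨i, S.mem_blockEdges.2 (.inr (.inr ⟨he, hcard⟩))⟩

theorem block_eq_of_mem_E {e : Finset V} (he : e ∈ S.E) {v w : V} (hv : v ∈ e) (hw : w ∈ e)
    {i j : I} (hvi : S.block v = some i) (hwj : S.block w = some j) : i = j := by
  obtain ⟨k, hk⟩ := S.mem_E.1 he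
  have := S.block_of_mem_blockEdges hk hv
  have := S.block_of_mem_blockEdges hk hw
  grind

theorem eq_xEdge_of_x_mem {e : Finset V} (he : e ∈ S.E) (hx : S.x ∈ e) :
    ∃ i v, S.block v = some i ∧ v ≠ S.a i ∧ e = {S.x, S.a i, v} := by
  obtain ⟨i, hi⟩ := S.mem_E.1 he
  obtain h | ⟨v, hv, -, rfl⟩ | ⟨hL, -⟩ := S.mem_blockEdges.1 hi
  · exact ⟨i, h⟩
  · simp only [mem_insert, mem_singleton] at hx
    grind [block_x, block_b, x_ne_y]
  · simpa using (S.mem_L.1 (hL hx)).1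

theorem y_notMem_of_x_mem {e : Finset V} (he : e ∈ S.E) (hx : S.x ∈ e) : S.y ∉ e := by
  obtain ⟨i, v, hv, -, rfl⟩ := S.eq_xEdge_of_x_mem he hx
  simp only [mem_insert, mem_singleton]
  grind [block_y, block_a, x_ne_y]

theorem exists_subset_L_of_hubFree {e : Finset V} (he : e ∈ S.E) (hx : S.x ∉ e) (hy : S.y ∉ e) :
    ∃ i, e ⊆ S.L i ∧ #e = 3 := by
  obtain ⟨i, hi⟩ := S.mem_E.1 he
  obtain ⟨v, -, -, rfl⟩ | ⟨v, -, -, rfl⟩ | h := S.mem_blockEdges.1 hi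
  · simp at hx
  · simp at hy
  · exact ⟨i, h⟩

theorem isUniform3 : IsUniform3 S.E := by
  intro e he
  obtain ⟨i, hi⟩ := S.mem_E.1 he
  obtain ⟨v, hv, hva, rfl⟩ | ⟨v, hv, hvb, rfl⟩ | ⟨-, h⟩ := S.mem_blockEdges.1 hi
  · rw [card_triple_eq_three_iff]; grind [block_x, block_a]
  · rw [card_triple_eq_three_iff]; grind [block_y, block_b]
  · exact h

/-! ### `C₃⁽³⁾`-freeness -/

theorem not_isLooseTriangle_of_x_mem {f g h : Finset V} (hf : f ∈ S.E) (hg : g ∈ S.E)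
    (hh : h ∈ S.E) (hxf : S.x ∈ f) (hxg : S.x ∈ g) : ¬ IsLooseTriangle f g h := by
  rintro ⟨p, q, r, hfg, hgh, hfh, hpq, hqr, hpr⟩
  obtain ⟨i, v, hv, hva, rfl⟩ := S.eq_xEdge_of_x_mem hf hxf
  obtain ⟨j, w, hw, hwa, rfl⟩ := S.eq_xEdge_of_x_mem hg hxg
  simp only [eq_singleton_iff_unique_mem, mem_inter, mem_insert, mem_singleton] at hfg hgh hfh
  have hr : S.block r = some i := by grind [block_x, block_a]
  have hq : S.block q = some j := by grind [block_x, block_a]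
  obtain rfl := S.block_eq_of_mem_E hh hfh.1.2 hgh.1.2 hr hq
  have hxp := hfg.2 S.x (by simp)
  have hap := hfg.2 (S.a i) (by simp)
  exact S.ne_of_block_ne (by simp [S.block_a]) (hap.trans hxp.symm)

theorem eq_xEdge_of_mem_L {f : Finset V} (hf : f ∈ S.E) (hx : S.x ∈ f) {r : V} (hr : r ∈ f)
    {k : I} (hrL : r ∈ S.L k) : f = {S.x, S.a k, r} := by
  obtain ⟨i, v, hv, hva, rfl⟩ := S.eq_xEdge_of_x_mem hf hx
  rw [mem_L] at hrL
  simp only [mem_insert, mem_singleton] at hr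
  obtain rfl : v = r := by grind [block_x, block_a]
  grind

theorem eq_hubEdge_of_inter_eq_singleton {f h : Finset V} (hf : f ∈ S.E) {k : I}
    (hh : h ⊆ S.L k) (hh3 : #h = 3) {r : V} (hfh : f ∩ h = {r}) :
    f = {S.x, S.a k, r} ∨ f = {S.y, S.b k, r} := by
  have hr : r ∈ f ∩ h := by simp [hfh]
  rw [mem_inter] at hr
  by_cases hx : S.x ∈ f
  · exact .inl (S.eq_xEdge_of_mem_L hf hx hr.1 (hh hr.2))
  by_cases hy : S.y ∈ f
  · exact .inr (S.swap.eq_xEdge_of_mem_L (S.swap_E ▸ hf) hy hr.1 (S.swap_L ▸ hh hr.2))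
  obtain ⟨i, hfL, hf3⟩ := S.exists_subset_L_of_hubFree hf hx hy
  exact (S.inter_ne_singleton_of_subset_L hfL hf3 hh hh3 r hfh).elim

theorem not_isLooseTriangle_of_hubFree {f g h : Finset V} (hf : f ∈ S.E) (hg : g ∈ S.E)
    (hh : h ∈ S.E) (hxh : S.x ∉ h) (hyh : S.y ∉ h) : ¬ IsLooseTriangle f g h := by
  rintro ⟨p, q, r, hfg, hgh, hfh, hpq, hqr, hpr⟩
  obtain ⟨k, hhL, hh3⟩ := S.exists_subset_L_of_hubFree hh hxh hyh
  have hrL : r ∈ S.L k := hhL (mem_of_mem_inter_right (hfh ▸ mem_singleton_self r))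
  have hqL : q ∈ S.L k := hhL (mem_of_mem_inter_right (hgh ▸ mem_singleton_self q))
  rw [mem_L] at hrL hqL
  obtain ⟨⟨hpf, hpg⟩, hp⟩ := eq_singleton_iff_unique_mem.1 hfg |>.imp_left mem_inter.1
  rcases S.eq_hubEdge_of_inter_eq_singleton hf hhL hh3 hfh with rfl | rfl <;>
  rcases S.eq_hubEdge_of_inter_eq_singleton hg hhL hh3 hgh with rfl | rfl
  · exact S.ne_of_block_ne (by simp [S.block_a])
      ((hp (S.a k) (by simp)).trans (hp S.x (by simp)).symm)
  · simp only [mem_insert, mem_singleton] at hpf hpg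
    grind [x_ne_y, a_ne_b, block_x, block_y, block_a, block_b]
  · simp only [mem_insert, mem_singleton] at hpf hpg
    grind [x_ne_y, a_ne_b, block_x, block_y, block_a, block_b]
  · exact S.ne_of_block_ne (by simp [S.block_b])
      ((hp (S.b k) (by simp)).trans (hp S.y (by simp)).symm)

theorem not_hasC3 : ¬ HasC3 S.E := by
  intro hC
  obtain ⟨f, hf, g, hg, h, hh, hT⟩ := hC.exists_isLooseTriangle
  have key : ∀ {f g h}, f ∈ S.E → g ∈ S.E → h ∈ S.E → IsLooseTriangle f g h →
      (S.x ∈ h ∨ S.y ∈ h) ∧ ¬ (S.x ∈ f ∧ S.x ∈ g) ∧ ¬ (S.y ∈ f ∧ S.y ∈ g) :=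
    fun hf hg hh hT =>
      ⟨by by_contra! H; exact S.not_isLooseTriangle_of_hubFree hf hg hh H.1 H.2 hT,
        fun H => S.not_isLooseTriangle_of_x_mem hf hg hh H.1 H.2 hT,
        fun H => S.swap.not_isLooseTriangle_of_x_mem (S.swap_E ▸ hf) (S.swap_E ▸ hg)
          (S.swap_E ▸ hh) H.1 H.2 hT⟩
  have := key hf hg hh hT
  have := key hg hh hf hT.rotate
  have := key hh hf hg hT.rotate.rotate
  have := S.y_notMem_of_x_mem hf
  have := S.y_notMem_of_x_mem hg
  have := S.y_notMem_of_x_mem hh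
  grind

/-! ### Saturation -/

theorem exists_xEdge_partner {i : I} {u z : V} (hu : S.block u = some i) (hz : z ≠ S.a i) :
    ∃ w, S.block w = some i ∧ w ≠ u ∧ w ≠ z ∧ {S.x, u, w} ∈ S.E := by
  by_cases hua : u = S.a i
  · subst hua
    obtain ⟨w, hw, hwn⟩ := S.exists_block_eq_some_notMem i (card_le_two.trans (by norm_num) :
      #{S.a i, z} ≤ 3)
    simp only [mem_insert, mem_singleton, not_or] at hwn
    exact ⟨w, hw, hwn.1, hwn.2, S.xEdge_mem hw hwn.1⟩
  · refine ⟨S.a i, S.block_a i, Ne.symm hua, Ne.symm hz, ?_⟩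
    rw [pair_comm]
    exact S.xEdge_mem hu hua

theorem hasC3_insert_of_x_mem_of_y_mem [Nontrivial I] {e : Finset V} (he : #e = 3)
    (hx : S.x ∈ e) (hy : S.y ∈ e) : HasC3 (insert e S.E) := by
  obtain ⟨w, hwx, hwy, rfl⟩ : ∃ w, w ≠ S.x ∧ w ≠ S.y ∧ e = {S.x, S.y, w} := by
    obtain ⟨u, v, huv, hux, hvx, rfl⟩ := exists_eq_triple_of_card_eq_three he hx
    simp only [mem_insert, mem_singleton] at hy
    rcases hy with h | rfl | rfl
    · exact absurd h.symm S.x_ne_y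
    · exact ⟨v, hvx, huv.symm, rfl⟩
    · exact ⟨u, hux, huv, by rw [pair_comm]⟩
  obtain ⟨i, hi⟩ := S.exists_block_eq_some hwx hwy
  obtain ⟨j, hji⟩ := exists_ne i
  obtain ⟨t, ht, htn⟩ := S.exists_block_eq_some_notMem j (card_le_two.trans (by norm_num) :
    #{S.a j, S.b j} ≤ 3)
  simp only [mem_insert, mem_singleton, not_or] at htn
  refine hasC3_of_nodup (a := S.x) (b := S.y) (c := t) (u := w) (v := S.b j) (w := S.a j) ?_
    (mem_insert_self _ _) (mem_insert_of_mem ?_) (mem_insert_of_mem ?_)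
  · grind [List.nodup_cons, x_ne_y, a_ne_b, block_x, block_y, block_a, block_b]
  · rw [pair_comm]; exact S.yEdge_mem ht htn.2
  · rw [pair_comm]; exact S.xEdge_mem ht htn.1

theorem hasC3_insert_x_of_block_ne {u v : V} {i j : I} (hu : S.block u = some i)
    (hv : S.block v = some j) (hij : i ≠ j) : HasC3 (insert {S.x, u, v} S.E) := by
  have hxb (k : I) : S.x ≠ S.b k := S.ne_of_block_ne (by simp [S.block_b])
  obtain ⟨w, hw, hwu, -, huw⟩ := S.swap.exists_xEdge_partner hu (hxb i)
  obtain ⟨w', hw', hwv, -, hvw⟩ := S.swap.exists_xEdge_partner hv (hxb j)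
  simp only [swap_E, swap_x, swap_block] at hw hw' huw hvw
  refine hasC3_of_nodup (a := S.y) (b := u) (c := v) (u := w) (v := S.x) (w := w') ?_
    (mem_insert_of_mem huw) ?_ (mem_insert_of_mem hvw)
  · grind [List.nodup_cons, x_ne_y, block_x, block_y]
  · rw [insert_comm S.x u, pair_comm S.x v]; exact mem_insert_self _ _

theorem hasC3_insert_x_b_of_mem_L {i : I} {l : V} (hl : l ∈ S.L i) :
    HasC3 (insert {S.x, S.b i, l} S.E) := by
  obtain ⟨t, ht, htn⟩ := S.exists_block_eq_some_notMem i (card_le_three : #{S.a i, S.b i, l} ≤ 3)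
  simp only [mem_insert, mem_singleton, not_or] at htn
  rw [mem_L] at hl
  have hba := S.yEdge_mem (S.block_a i) (S.a_ne_b i)
  rw [insert_comm, pair_comm] at hba
  refine hasC3_of_nodup (a := S.x) (b := S.b i) (c := S.a i) (u := l) (v := S.y) (w := t) ?_
    (mem_insert_self _ _) (mem_insert_of_mem hba) (mem_insert_of_mem (S.xEdge_mem ht htn.1))
  grind [List.nodup_cons, x_ne_y, a_ne_b, block_x, block_y, block_a, block_b]

theorem hasC3_insert_x_of_mem_L {i : I} {u v : V} (hu : u ∈ S.L i) (hv : v ∈ S.L i)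
    (huv : u ≠ v) : HasC3 (insert {S.x, u, v} S.E) := by
  rw [mem_L] at hu hv
  have hab := S.xEdge_mem (S.block_b i) (S.a_ne_b i).symm
  have hbu := S.yEdge_mem hu.1 hu.2.2
  rw [pair_comm] at hab
  rw [insert_comm, pair_comm] at hbu
  refine hasC3_of_nodup (a := S.x) (b := S.b i) (c := u) (u := S.a i) (v := S.y) (w := v) ?_
    (mem_insert_of_mem hab) (mem_insert_of_mem hbu) (mem_insert_self _ _)
  grind [List.nodup_cons, x_ne_y, a_ne_b, block_x, block_y, block_a, block_b]

theorem hasC3_insert_of_x_mem {e : Finset V} (he : #e = 3) (hne : e ∉ S.E) (hx : S.x ∈ e)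
    (hy : S.y ∉ e) : HasC3 (insert e S.E) := by
  obtain ⟨u, v, huv, hux, hvx, rfl⟩ := exists_eq_triple_of_card_eq_three he hx
  simp only [mem_insert, mem_singleton, not_or] at hy
  obtain ⟨i, hi⟩ := S.exists_block_eq_some hux (Ne.symm hy.2.1)
  obtain ⟨j, hj⟩ := S.exists_block_eq_some hvx (Ne.symm hy.2.2)
  rcases ne_or_eq i j with hij | rfl
  · exact S.hasC3_insert_x_of_block_ne hi hj hij
  have hua : u ≠ S.a i := by
    rintro rfl; exact hne (S.xEdge_mem hj huv.symm)
  have hva : v ≠ S.a i := by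
    rintro rfl; exact hne (pair_comm u _ ▸ S.xEdge_mem hi huv)
  by_cases hub : u = S.b i
  · subst hub; exact S.hasC3_insert_x_b_of_mem_L (S.mem_L.2 ⟨hj, hva, huv.symm⟩)
  by_cases hvb : v = S.b i
  · subst hvb; rw [pair_comm]; exact S.hasC3_insert_x_b_of_mem_L (S.mem_L.2 ⟨hi, hua, huv⟩)
  exact S.hasC3_insert_x_of_mem_L (S.mem_L.2 ⟨hi, hua, hub⟩) (S.mem_L.2 ⟨hj, hva, hvb⟩) huv

theorem hasC3_insert_a_b_of_mem_L {i : I} {l : V} (hl : l ∈ S.L i) :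
    HasC3 (insert {S.a i, S.b i, l} S.E) := by
  obtain ⟨t, ht, htn⟩ := S.exists_block_eq_some_notMem i (card_le_three : #{S.a i, S.b i, l} ≤ 3)
  simp only [mem_insert, mem_singleton, not_or] at htn
  rw [mem_L] at hl
  have hbt := S.yEdge_mem ht htn.2.1
  have hat := S.xEdge_mem ht htn.1
  rw [insert_comm, pair_comm] at hbt hat
  refine hasC3_of_nodup (a := S.a i) (b := S.b i) (c := t) (u := l) (v := S.y) (w := S.x) ?_
    (mem_insert_self _ _) (mem_insert_of_mem hbt) (mem_insert_of_mem hat)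
  grind [List.nodup_cons, x_ne_y, a_ne_b, block_x, block_y, block_a, block_b]

theorem hasC3_insert_a_of_mem_L {i : I} {p q : V} (hp : p ∈ S.L i) (hq : q ∈ S.L i)
    (hpq : p ≠ q) : HasC3 (insert {S.a i, p, q} S.E) := by
  rw [mem_L] at hp hq
  have hab := S.xEdge_mem (S.block_b i) (S.a_ne_b i).symm
  have hbp := S.yEdge_mem hp.1 hp.2.2
  rw [insert_comm, pair_comm] at hab hbp
  refine hasC3_of_nodup (a := S.a i) (b := S.b i) (c := p) (u := S.x) (v := S.y) (w := q) ?_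
    (mem_insert_of_mem hab) (mem_insert_of_mem hbp) (mem_insert_self _ _)
  grind [List.nodup_cons, x_ne_y, a_ne_b, block_x, block_y, block_a, block_b]

theorem hasC3_insert_of_a_mem {e : Finset V} (he : #e = 3) {i : I}
    (hsub : ∀ v ∈ e, S.block v = some i) (ha : S.a i ∈ e) : HasC3 (insert e S.E) := by
  obtain ⟨p, q, hpq, hpa, hqa, rfl⟩ := exists_eq_triple_of_card_eq_three he ha
  have hp : S.block p = some i := hsub p (by simp)
  have hq : S.block q = some i := hsub q (by simp)
  by_cases hpb : p = S.b i
  · subst hpb; exact S.hasC3_insert_a_b_of_mem_L (S.mem_L.2 ⟨hq, hqa, hpq.symm⟩)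
  by_cases hqb : q = S.b i
  · subst hqb; rw [pair_comm]; exact S.hasC3_insert_a_b_of_mem_L (S.mem_L.2 ⟨hp, hpa, hpq⟩)
  exact S.hasC3_insert_a_of_mem_L (S.mem_L.2 ⟨hp, hpa, hpb⟩) (S.mem_L.2 ⟨hq, hqa, hqb⟩) hpq

theorem hasC3_insert_of_subset_block {e : Finset V} (he : #e = 3) (hne : e ∉ S.E) {i : I}
    (hsub : ∀ v ∈ e, S.block v = some i) : HasC3 (insert e S.E) := by
  by_cases ha : S.a i ∈ e
  · exact S.hasC3_insert_of_a_mem he hsub ha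
  by_cases hb : S.b i ∈ e
  · exact S.swap_E ▸ S.swap.hasC3_insert_of_a_mem he hsub hb
  exact (hne (S.mem_E_of_subset_L (fun v hv => S.mem_L.2 ⟨hsub v hv, fun h => ha (h ▸ hv),
    fun h => hb (h ▸ hv)⟩) he)).elim

theorem hasC3_insert_of_block_ne_of_ne_a {u v z : V} {i j k : I} (hu : S.block u = some i)
    (hv : S.block v = some j) (hz : S.block z = some k) (hij : i ≠ j) (hzu : z ≠ u) (hzv : z ≠ v)
    (hzi : z ≠ S.a i) (hzj : z ≠ S.a j) : HasC3 (insert {u, v, z} S.E) := by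
  obtain ⟨w, hw, hwu, hwz, huw⟩ := S.exists_xEdge_partner hu hzi
  obtain ⟨w', hw', hwv, hwz', hvw⟩ := S.exists_xEdge_partner hv hzj
  refine hasC3_of_nodup (a := S.x) (b := u) (c := v) (u := w) (v := z) (w := w') ?_
    (mem_insert_of_mem huw) (mem_insert_self _ _) (mem_insert_of_mem hvw)
  grind [List.nodup_cons, block_x]

theorem hasC3_insert_of_block_ne {u v z : V} {i j k : I} (hu : S.block u = some i)
    (hv : S.block v = some j) (hz : S.block z = some k) (hij : i ≠ j) (hzu : z ≠ u) (hzv : z ≠ v) :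
    HasC3 (insert {u, v, z} S.E) := by
  by_cases hza : z ≠ S.a i ∧ z ≠ S.a j
  · exact S.hasC3_insert_of_block_ne_of_ne_a hu hv hz hij hzu hzv hza.1 hza.2
  have hzb : z ≠ S.b i ∧ z ≠ S.b j := by grind [a_ne_b, block_a, block_b]
  exact S.swap_E ▸ S.swap.hasC3_insert_of_block_ne_of_ne_a hu hv hz hij hzu hzv hzb.1 hzb.2

theorem hasC3_insert_of_hubFree {e : Finset V} (he : #e = 3) (hne : e ∉ S.E) (hx : S.x ∉ e)
    (hy : S.y ∉ e) : HasC3 (insert e S.E) := by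
  obtain ⟨u, v, w, huv, huw, hvw, rfl⟩ := card_eq_three.1 he
  simp only [mem_insert, mem_singleton, not_or] at hx hy
  obtain ⟨i, hi⟩ := S.exists_block_eq_some (Ne.symm hx.1) (Ne.symm hy.1)
  obtain ⟨j, hj⟩ := S.exists_block_eq_some (Ne.symm hx.2.1) (Ne.symm hy.2.1)
  obtain ⟨k, hk⟩ := S.exists_block_eq_some (Ne.symm hx.2.2) (Ne.symm hy.2.2)
  by_cases hij : i = j
  · by_cases hik : i = k
    · subst hij hik
      exact S.hasC3_insert_of_subset_block he hne (i := i) (by simp [hi, hj, hk])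
    rw [pair_comm]
    exact S.hasC3_insert_of_block_ne hi hk hj hik huv.symm hvw
  exact S.hasC3_insert_of_block_ne hi hj hk hij huw.symm hvw.symm

theorem isSat3 [Nontrivial I] : IsSat3 S.E := by
  refine ⟨S.isUniform3, S.not_hasC3, fun e he hne => ?_⟩
  by_cases hx : S.x ∈ e <;> by_cases hy : S.y ∈ e
  · exact S.hasC3_insert_of_x_mem_of_y_mem he hx hy
  · exact S.hasC3_insert_of_x_mem he hne hx hy
  · exact S.swap_E ▸ S.swap.hasC3_insert_of_x_mem he (S.swap_E ▸ hne) hy hx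
  · exact S.hasC3_insert_of_hubFree he hne hx hy

end

/-! ### Edge counts -/

theorem card_xEdges_add_one (i : I) : #(S.xEdges i) + 1 = #(S.B i) := by
  rw [xEdges, card_image_of_injOn, card_erase_add_one (S.mem_B.2 (S.block_a i))]
  intro v hv w hw hvw
  simp only [coe_erase, Set.mem_sdiff, mem_coe, mem_B, Set.mem_singleton_iff] at hv hw
  have : v ∈ ({S.x, S.a i, w} : Finset V) := by simp only at hvw; rw [← hvw]; simp
  simp only [mem_insert, mem_singleton] at this
  grind [block_x]

theorem x_mem_of_mem_xEdges {e : Finset V} {i : I} (he : e ∈ S.xEdges i) : S.x ∈ e := by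
  obtain ⟨v, -, -, rfl⟩ := S.mem_xEdges.1 he
  simp

theorem y_notMem_of_mem_xEdges {e : Finset V} {i : I} (he : e ∈ S.xEdges i) : S.y ∉ e := by
  obtain ⟨v, hv, -, rfl⟩ := S.mem_xEdges.1 he
  simp only [mem_insert, mem_singleton]
  grind [x_ne_y, block_y, block_a]

theorem hubFree_of_mem_powersetCard_L {e : Finset V} {i : I}
    (he : e ∈ (S.L i).powersetCard 3) : S.x ∉ e ∧ S.y ∉ e := by
  have hL := (mem_powersetCard.1 he).1
  exact ⟨fun h => by simpa using (S.mem_L.1 (hL h)).1, fun h => by simpa using (S.mem_L.1 (hL h)).1⟩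

theorem card_blockEdges (i : I) : #(S.blockEdges i) + 6 = 3 * #(S.B i) := by
  have hX := S.card_xEdges_add_one i
  have hY := S.swap.card_xEdges_add_one i
  have hL := S.card_L_add_two i
  have : 4 ≤ #(S.B i) := S.four_le_card i
  have : #(S.B i) ≤ 5 := S.card_le_five i
  rw [swap_B] at hY
  rw [blockEdges, card_union_of_disjoint, card_union_of_disjoint, card_powersetCard]
  · obtain h | h : #(S.L i) = 2 ∨ #(S.L i) = 3 := by omega
    all_goals rw [h] at hL ⊢; norm_num [Nat.choose]; omega
  · exact disjoint_left.2 fun e hX hY =>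
      S.swap.y_notMem_of_mem_xEdges hY (S.x_mem_of_mem_xEdges hX)
  · refine disjoint_left.2 fun e hXY hZ => ?_
    rcases mem_union.1 hXY with hX | hY
    · exact (S.hubFree_of_mem_powersetCard_L hZ).1 (S.x_mem_of_mem_xEdges hX)
    · exact (S.hubFree_of_mem_powersetCard_L hZ).2 (S.swap.x_mem_of_mem_xEdges hY)

theorem card_eq_two_add_sum_card_B [Fintype I] : Fintype.card V = 2 + ∑ i, #(S.B i) := by
  have hnone : #{v | S.block v = none} = 2 := by
    rw [← card_pair S.x_ne_y]
    congr 1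
    ext v
    simp [S.block_eq_none]
  rw [← card_univ, card_eq_sum_card_fiberwise (f := S.block) (t := univ) (by simp),
    Fintype.sum_option, hnone]
  rfl

theorem card_E_add_six_mul [Fintype I] : #S.E + 6 * (Fintype.card I + 1) = 3 * Fintype.card V := by
  have hdisj : ((univ : Finset I) : Set I).PairwiseDisjoint S.blockEdges := by
    intro i _ j _ hij
    refine disjoint_left.2 fun e hi hj => hij ?_
    obtain ⟨v, hv, hvi⟩ := S.exists_mem_of_mem_blockEdges hi
    rcases S.block_of_mem_blockEdges hj hv with h | h <;> rw [hvi] at h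
    · exact (Option.some_ne_none _ h).elim
    · exact Option.some_injective _ h
  calc #S.E + 6 * (Fintype.card I + 1) = ∑ i, (#(S.blockEdges i) + 6) + 6 := by
        rw [E, card_biUnion hdisj, sum_add_distrib, sum_const, card_univ, smul_eq_mul]
        ring
    _ = 3 * Fintype.card V := by
        simp only [card_blockEdges, ← mul_sum, S.card_eq_two_add_sum_card_B]
        ring

end BlockSetup

section FinConstruction

/-- Vertices `0` and `1` are the hubs; block `i` is `[blockStart s i, blockStart s (i + 1))`, with
4 vertices for `i < s` and 5 otherwise. -/
def blockStart (s i : ℕ) : ℕ := 2 + 4 * i + (i - s)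

def blockIndex (s v : ℕ) : ℕ := if v - 2 < 4 * s then (v - 2) / 4 else s + (v - 2 - 4 * s) / 5

theorem blockIndex_eq_iff {s v i : ℕ} (hv : 2 ≤ v) :
    blockIndex s v = i ↔ blockStart s i ≤ v ∧ v < blockStart s (i + 1) := by
  unfold blockIndex blockStart
  split_ifs <;> omega

theorem blockIndex_lt {s m v : ℕ} (hs : s ≤ m) (hv2 : 2 ≤ v) (hv : v < blockStart s m) :
    blockIndex s v < m := by
  unfold blockIndex blockStart at *
  split_ifs <;> omega

variable {s m : ℕ} (hs : s ≤ m)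

def finBlock (v : Fin (blockStart s m)) : Option (Fin m) :=
  if h : 2 ≤ v.val then some ⟨blockIndex s v, blockIndex_lt hs h v.isLt⟩ else none

theorem finBlock_eq_some_iff {v : Fin (blockStart s m)} {i : Fin m} :
    finBlock hs v = some i ↔ blockStart s i ≤ v ∧ v < blockStart s (i + 1) := by
  have h2 : 2 ≤ blockStart s i := by unfold blockStart; omega
  simp only [finBlock, Fin.ext_iff, Option.dite_none_right_eq_some, Option.some.injEq]
  constructor
  · rintro ⟨hv, h⟩; exact (blockIndex_eq_iff hv).1 h
  · rintro h; exact ⟨by omega, (blockIndex_eq_iff (by omega)).2 h⟩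

theorem card_finBlock_eq_some (i : Fin m) :
    #{v | finBlock hs v = some i} = blockStart s (i + 1) - blockStart s i := by
  have hlt : ∀ v ∈ Ico (blockStart s i) (blockStart s (i + 1)), v < blockStart s m := by
    intro v hv; rw [mem_Ico] at hv; unfold blockStart at *; omega
  rw [← Nat.card_Ico, ← card_attachFin _ hlt]
  congr 1
  ext v
  simp [finBlock_eq_some_iff, mem_attachFin]

def finBlockSetup : BlockSetup (Fin (blockStart s m)) (Fin m) where
  x := ⟨0, by unfold blockStart; omega⟩
  y := ⟨1, by unfold blockStart; omega⟩
  block := finBlock hs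
  a i := ⟨blockStart s i, by unfold blockStart; omega⟩
  b i := ⟨blockStart s i + 1, by unfold blockStart; omega⟩
  x_ne_y := by simp [Fin.ext_iff]
  block_eq_none v := by simp [finBlock, Fin.ext_iff]; omega
  block_a i := (finBlock_eq_some_iff hs).2 (by dsimp only; unfold blockStart; omega)
  block_b i := (finBlock_eq_some_iff hs).2 (by dsimp only; unfold blockStart; omega)
  a_ne_b i := by simp [Fin.ext_iff]
  four_le_card i := by rw [card_finBlock_eq_some]; unfold blockStart; omega
  card_le_five i := by rw [card_finBlock_eq_some]; unfold blockStart; omega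

end FinConstruction

theorem construction_exists (n m c : ℕ) (hn : 14 ≤ n)
    (hnmc : n = 4 * m + c) (hc2 : 2 ≤ c) (hc5 : c ≤ 5) :
    ∃ E : Finset (Finset (Fin n)), IsSat3 E ∧ (E.card : ℤ) = 6 * m + 3 * c - 6 := by
  have hs : m + 2 - c ≤ m := by omega
  obtain rfl : n = blockStart (m + 2 - c) m := by unfold blockStart; omega
  have : Nontrivial (Fin m) := Fin.nontrivial_iff_two_le.2 (by omega)
  refine ⟨(finBlockSetup hs).E, (finBlockSetup hs).isSat3, ?_⟩
  have hcard := (finBlockSetup hs).card_E_add_six_mul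
  rw [Fintype.card_fin, Fintype.card_fin] at hcard
  omega
end

section
/- Let G be a C_3^{(3)}-saturated 3-uniform hypergraph on n ≥ 5 vertices and let u, v be distinct vertices with d(uv) = d(v) = 2. Then v is the only vertex of degree 2 that is a double neighbor of u; that is, there is no vertex w ∉ {u, v} with d(w) = 2 and d(uw) ≥ 2. -/
open Finset

variable {V : Type*}

/-!
Every edge through `v`, and every edge through `w`, contains `u`, since their degrees equal
their codegrees with `u`. If a triple `e` is not an edge of a saturated hypergraph, the copy of
`C₃⁽³⁾` created by adding `e` is a link `g, h` between two distinct vertices `x, y` of `e` with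
`e ∩ g = {x}` and `e ∩ h = {y}`. For `e = uvw` only `u` can meet an edge alone, so `uvw` is an
edge. Let `uwz` be the other edge at `w`. For `e = uvz` a link between `u` and `z` would also
close the edge `uwz` into a `C₃⁽³⁾`, so `uvz` is an edge. Then the edges at `v` are `uvw, uvz`
and those at `w` are `uvw, uwz`, so for `e = vwz` only `z` can meet an edge alone and `vwz` is an
edge; but it misses `u` although it contains `v`.
-/

namespace Finset

variable {α : Type*} [DecidableEq α]

lemma mem_of_inter_eq_singleton {s t : Finset α} {a : α} (h : s ∩ t = {a}) : a ∈ s ∧ a ∈ t :=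
  mem_inter.mp (h ▸ mem_singleton_self a)

lemma eq_of_mem_of_inter_eq_singleton {s t : Finset α} {a b : α} (h : s ∩ t = {a})
    (hs : b ∈ s) (ht : b ∈ t) : b = a :=
  mem_singleton.mp (h ▸ mem_inter.mpr ⟨hs, ht⟩)

lemma inter_eq_singleton_of_inter_subset {s t g : Finset α} {a : α} (h : s ∩ g = {a})
    (ha : a ∈ t) (hts : t ∩ g ⊆ s) : t ∩ g = {a} :=
  eq_singleton_iff_unique_mem.mpr ⟨mem_inter.mpr ⟨ha, (mem_of_inter_eq_singleton h).2⟩,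
    fun _ hb => eq_of_mem_of_inter_eq_singleton h (hts hb) (mem_inter.mp hb).2⟩

lemma exists_eq_triple_of_card_eq_three_s4 {s : Finset α} (hs : #s = 3) {a b : α} (ha : a ∈ s)
    (hb : b ∈ s) (hab : a ≠ b) : ∃ c, c ≠ a ∧ c ≠ b ∧ s = {a, b, c} := by
  have hcard : #((s.erase a).erase b) = 1 := by
    rw [card_erase_of_mem (mem_erase_of_ne_of_mem hab.symm hb), card_erase_of_mem ha, hs]
  obtain ⟨c, hc⟩ := card_eq_one.mp hcard
  have hc' : c ∈ (s.erase a).erase b := hc ▸ mem_singleton_self c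
  simp only [mem_erase] at hc'
  obtain ⟨hcb, hca, hcs⟩ := hc'
  refine ⟨c, hca, hcb, (eq_of_subset_of_card_le ?_ ?_).symm⟩
  · simp [insert_subset_iff, ha, hb, hcs]
  · rw [hs, card_eq_three.mpr ⟨a, b, c, hab, hca.symm, hcb.symm, rfl⟩]

end Finset

section Hypergraph

variable [DecidableEq V] {E : Finset (Finset V)}

lemma mem_of_deg_le_codeg {u v : V} (h : deg E v ≤ codeg E u v) {g : Finset V} (hg : g ∈ E)
    (hv : v ∈ g) : u ∈ g := by
  have hsub : E.filter (fun e => u ∈ e ∧ v ∈ e) ⊆ E.filter (fun e => v ∈ e) :=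
    monotone_filter_right E fun _ _ => And.right
  have hg' : g ∈ E.filter (fun e => u ∈ e ∧ v ∈ e) := by
    rw [eq_of_subset_of_card_le hsub h]
    exact mem_filter.mpr ⟨hg, hv⟩
  exact (mem_filter.mp hg').2.1

lemma exists_mem_ne_of_one_lt_deg {w : V} (h : 1 < deg E w) (A : Finset V) :
    ∃ C ∈ E, w ∈ C ∧ C ≠ A := by
  obtain ⟨C, hC, hCA⟩ := exists_mem_ne h A
  exact ⟨C, (mem_filter.mp hC).1, (mem_filter.mp hC).2, hCA⟩

lemma eq_or_eq_of_deg_eq_two {w : V} (h : deg E w = 2) {A C : Finset V} (hA : A ∈ E)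
    (hwA : w ∈ A) (hC : C ∈ E) (hwC : w ∈ C) (hAC : A ≠ C) {g : Finset V} (hg : g ∈ E)
    (hwg : w ∈ g) : g = A ∨ g = C := by
  have hsub : {A, C} ⊆ E.filter (fun e => w ∈ e) := by
    simp [insert_subset_iff, hA, hwA, hC, hwC]
  have hg' : g ∈ ({A, C} : Finset (Finset V)) := by
    rw [eq_of_subset_of_card_le hsub (h.trans (card_pair hAC).symm).le]
    exact mem_filter.mpr ⟨hg, hwg⟩
  simpa using hg'

lemma IsLink.ne {x y : V} {g h : Finset V} (hl : IsLink E x y g h) : x ≠ y := by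
  obtain ⟨-, -, hxg, -, -, hyg, -⟩ := hl
  rintro rfl
  exact hyg hxg

lemma isLink_of_inter_eq_singleton {e g h : Finset V} {x y m : V} (hg : g ∈ E) (hh : h ∈ E)
    (hx : e ∩ g = {x}) (hy : e ∩ h = {y}) (hm : g ∩ h = {m}) (hxy : x ≠ y) (hxm : x ≠ m)
    (hym : y ≠ m) : IsLink E x y g h := by
  obtain ⟨hxe, hxg⟩ := mem_of_inter_eq_singleton hx
  obtain ⟨hye, hyh⟩ := mem_of_inter_eq_singleton hy
  refine ⟨hg, hh, hxg, hyh, fun hxh => hxy (eq_of_mem_of_inter_eq_singleton hy hxe hxh),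
    fun hyg => hxy (eq_of_mem_of_inter_eq_singleton hx hye hyg).symm, m, ?_, hm⟩
  simp [hxm.symm, hym.symm]

lemma exists_isLink_of_hasC3_insert (hfree : ¬ HasC3 E) {e : Finset V}
    (hC3 : HasC3 (insert e E)) :
    ∃ x y g h, IsLink E x y g h ∧ e ∩ g = {x} ∧ e ∩ h = {y} := by
  obtain ⟨e₁, he₁, e₂, he₂, e₃, he₃, a, b, c, h12, h23, h13, hab, hbc, hac, htri⟩ := hC3
  have d12 : e₁ ≠ e₂ := by
    rintro rfl
    exact hbc (singleton_injective (h23.symm.trans h13))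
  have d13 : e₁ ≠ e₃ := by
    rintro rfl
    exact hab (singleton_injective (h12.symm.trans (inter_comm e₂ e₁ ▸ h23)))
  have d23 : e₂ ≠ e₃ := by
    rintro rfl
    exact hac (singleton_injective (h12.symm.trans h13))
  rcases eq_or_ne e₁ e with rfl | h1
  · exact ⟨a, c, e₂, e₃, isLink_of_inter_eq_singleton (mem_of_mem_insert_of_ne he₂ d12.symm)
      (mem_of_mem_insert_of_ne he₃ d13.symm) h12 h13 h23 hac hab hbc.symm, h12, h13⟩
  have hE₁ := mem_of_mem_insert_of_ne he₁ h1
  rcases eq_or_ne e₂ e with rfl | h2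
  · rw [inter_comm] at h12
    exact ⟨a, b, e₁, e₃, isLink_of_inter_eq_singleton hE₁ (mem_of_mem_insert_of_ne he₃ d23.symm)
      h12 h23 h13 hab hac hbc, h12, h23⟩
  have hE₂ := mem_of_mem_insert_of_ne he₂ h2
  rcases eq_or_ne e₃ e with rfl | h3
  · rw [inter_comm] at h13 h23
    exact ⟨c, b, e₁, e₂, isLink_of_inter_eq_singleton hE₁ hE₂ h13 h23 h12 hbc.symm hac.symm
      hab.symm, h13, h23⟩
  exact (hfree ⟨e₁, hE₁, e₂, hE₂, e₃, mem_of_mem_insert_of_ne he₃ h3, a, b, c, h12, h23, h13, hab,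
    hbc, hac, htri⟩).elim

lemma hasC3_of_isLink {a b : V} {g h C : Finset V} (hl : IsLink E a b g h) (hC : C ∈ E)
    (hCg : C ∩ g = {a}) (hCh : C ∩ h = {b}) : HasC3 E := by
  obtain ⟨hg, hh, hag, -, hah, -, m, hm, hgh⟩ := hl
  have hma : m ≠ a := by rintro rfl; simp at hm
  have hmb : m ≠ b := by rintro rfl; simp at hm
  have hmC : m ∉ C := fun hmC =>
    hma (eq_of_mem_of_inter_eq_singleton hCg hmC (mem_of_inter_eq_singleton hgh).1)
  refine ⟨g, hg, h, hh, C, hC, m, b, a, hgh, by rw [inter_comm, hCh], by rw [inter_comm, hCg],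
    hmb, fun hba => hah (hba ▸ (mem_of_inter_eq_singleton hCh).2), hma, ?_⟩
  rw [hgh, singleton_inter_of_notMem hmC]

lemma IsSat3.mem_of_forall_exists_mem (hsat : IsSat3 E) {e : Finset V} (he : #e = 3) {a : V}
    (h : ∀ x ∈ e, x ≠ a → ∀ g ∈ E, x ∈ g → ∃ y ∈ e, y ≠ x ∧ y ∈ g) : e ∈ E := by
  by_contra heE
  obtain ⟨x, y, g, k, hl, hx, hy⟩ :=
    exists_isLink_of_hasC3_insert hsat.2.1 (hsat.2.2 e he heE)
  have anchor : ∀ g ∈ E, ∀ x, e ∩ g = {x} → x = a := by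
    intro g hg x hx
    by_contra hxa
    obtain ⟨hxe, hxg⟩ := mem_of_inter_eq_singleton hx
    obtain ⟨y, hye, hyx, hyg⟩ := h x hxe hxa g hg hxg
    exact hyx (eq_of_mem_of_inter_eq_singleton hx hye hyg)
  exact hl.ne ((anchor g hl.1 x hx).trans (anchor k hl.2.1 y hy).symm)

lemma IsSat3.mem_of_forall_inter_eq_singleton (hsat : IsSat3 E) {e C : Finset V} (he : #e = 3)
    (hC : C ∈ E) (h : ∀ g ∈ E, ∀ x, e ∩ g = {x} → C ∩ g = {x}) : e ∈ E := by
  by_contra heE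
  obtain ⟨x, y, g, k, hl, hx, hy⟩ :=
    exists_isLink_of_hasC3_insert hsat.2.1 (hsat.2.2 e he heE)
  exact hsat.2.1 (hasC3_of_isLink hl hC (h g hl.1 x hx) (h k hl.2.1 y hy))

end Hypergraph

section Configuration

variable [DecidableEq V] {E : Finset (Finset V)} {u v w z : V}

lemma IsSat3.triple_mem_of_forall_mem_imp (hsat : IsSat3 E) (huv : u ≠ v) (huw : u ≠ w)
    (hvw : v ≠ w) (hv : ∀ g ∈ E, v ∈ g → u ∈ g) (hw : ∀ g ∈ E, w ∈ g → u ∈ g) :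
    {u, v, w} ∈ E := by
  refine hsat.mem_of_forall_exists_mem (card_eq_three.mpr ⟨u, v, w, huv, huw, hvw, rfl⟩)
    (a := u) fun x hx hxu g hg hxg => ⟨u, by simp, hxu.symm, ?_⟩
  simp only [mem_insert, mem_singleton] at hx
  rcases hx with rfl | rfl | rfl
  · exact absurd rfl hxu
  · exact hv g hg hxg
  · exact hw g hg hxg

lemma IsSat3.triple_mem_of_forall_mem_or_mem (hsat : IsSat3 E) (hvw : v ≠ w) (hvz : v ≠ z)
    (hwz : w ≠ z) (hv : ∀ g ∈ E, v ∈ g → w ∈ g ∨ z ∈ g) (hw : ∀ g ∈ E, w ∈ g → v ∈ g ∨ z ∈ g) :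
    {v, w, z} ∈ E := by
  refine hsat.mem_of_forall_exists_mem (card_eq_three.mpr ⟨v, w, z, hvw, hvz, hwz, rfl⟩)
    (a := z) fun x hx hxz g hg hxg => ?_
  simp only [mem_insert, mem_singleton] at hx
  rcases hx with rfl | rfl | rfl
  · rcases hv g hg hxg with h | h
    · exact ⟨w, by simp, hvw.symm, h⟩
    · exact ⟨z, by simp, hvz.symm, h⟩
  · rcases hw g hg hxg with h | h
    · exact ⟨v, by simp, hvw, h⟩
    · exact ⟨z, by simp, hwz.symm, h⟩
  · exact absurd rfl hxz

lemma IsSat3.triple_mem_of_forall_mem_eq_or_eq (hsat : IsSat3 E) (huv : u ≠ v) (huz : u ≠ z)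
    (hvz : v ≠ z) (hv : ∀ g ∈ E, v ∈ g → u ∈ g) (hC : {u, w, z} ∈ E)
    (hw : ∀ g ∈ E, w ∈ g → g = {u, v, w} ∨ g = {u, w, z}) : {u, v, z} ∈ E := by
  refine hsat.mem_of_forall_inter_eq_singleton (card_eq_three.mpr ⟨u, v, z, huv, huz, hvz, rfl⟩)
    hC fun g hg x hx => ?_
  obtain ⟨hxe, hxg⟩ := mem_of_inter_eq_singleton hx
  have hwg : w ∉ g := by
    intro hwg
    rcases hw g hg hwg with rfl | rfl
    · exact huv ((eq_of_mem_of_inter_eq_singleton hx (by simp) (by simp)).trans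
        (eq_of_mem_of_inter_eq_singleton hx (by simp) (by simp)).symm)
    · exact huz ((eq_of_mem_of_inter_eq_singleton hx (by simp) (by simp)).trans
        (eq_of_mem_of_inter_eq_singleton hx (by simp) (by simp)).symm)
  have hxC : x ∈ ({u, w, z} : Finset V) := by
    simp only [mem_insert, mem_singleton] at hxe ⊢
    rcases hxe with rfl | rfl | rfl
    · exact Or.inl rfl
    · exact absurd (eq_of_mem_of_inter_eq_singleton hx (by simp) (hv g hg hxg)) huv
    · exact Or.inr (Or.inr rfl)
  refine inter_eq_singleton_of_inter_subset hx hxC fun y hy => ?_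
  obtain ⟨hyC, hyg⟩ := mem_inter.mp hy
  simp only [mem_insert, mem_singleton] at hyC
  rcases hyC with rfl | rfl | rfl
  · simp
  · exact absurd hyg hwg
  · simp

end Configuration

theorem unique_deg_two_double_neighbor_general {V : Type*} [DecidableEq V]
    (E : Finset (Finset V)) (hsat : IsSat3 E)
    (u v : V) (huv : u ≠ v) (hcod : codeg E u v = 2) (hdv : deg E v = 2) :
    ¬ ∃ w : V, w ≠ u ∧ w ≠ v ∧ deg E w = 2 ∧ 2 ≤ codeg E u w := by
  rintro ⟨w, hwu, hwv, hdw, hcodw⟩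
  have hv : ∀ g ∈ E, v ∈ g → u ∈ g := fun _ => mem_of_deg_le_codeg (hdv.trans hcod.symm).le
  have hw : ∀ g ∈ E, w ∈ g → u ∈ g := fun _ => mem_of_deg_le_codeg (hdw.trans_le hcodw)
  have hA : {u, v, w} ∈ E := hsat.triple_mem_of_forall_mem_imp huv hwu.symm hwv.symm hv hw
  obtain ⟨C, hCE, hwC, hCA⟩ := exists_mem_ne_of_one_lt_deg (hdw ▸ one_lt_two) {u, v, w}
  obtain ⟨z, hzu, hzw, rfl⟩ :=
    exists_eq_triple_of_card_eq_three_s4 (hsat.1 C hCE) (hw C hCE hwC) hwC hwu.symm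
  have hzv : z ≠ v := by
    rintro rfl
    exact hCA (by rw [pair_comm])
  have hw_edges : ∀ g ∈ E, w ∈ g → g = {u, v, w} ∨ g = {u, w, z} := fun _ =>
    eq_or_eq_of_deg_eq_two hdw hA (by simp) hCE (by simp) hCA.symm
  have hB : {u, v, z} ∈ E :=
    hsat.triple_mem_of_forall_mem_eq_or_eq huv hzu.symm hzv.symm hv hCE hw_edges
  have hAB : ({u, v, w} : Finset V) ≠ {u, v, z} := fun h => by
    have : w ∈ ({u, v, z} : Finset V) := h ▸ by simp
    simp [hwu, hwv, hzw.symm] at this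
  have hv_edges : ∀ g ∈ E, v ∈ g → g = {u, v, w} ∨ g = {u, v, z} := fun _ =>
    eq_or_eq_of_deg_eq_two hdv hA (by simp) hB (by simp) hAB
  have hvwz : {v, w, z} ∈ E := hsat.triple_mem_of_forall_mem_or_mem hwv.symm hzv.symm hzw.symm
    (fun g hg hvg => (hv_edges g hg hvg).imp (fun h => by simp [h]) (fun h => by simp [h]))
    (fun g hg hwg => (hw_edges g hg hwg).imp (fun h => by simp [h]) (fun h => by simp [h]))
  have hu := hv _ hvwz (by simp)
  simp only [mem_insert, mem_singleton] at hu
  rcases hu with h | h | h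
  exacts [huv h, hwu h.symm, hzu h.symm]

theorem unique_deg_two_double_neighbor {V : Type*} [Fintype V] [DecidableEq V]
    (E : Finset (Finset V)) (hsat : IsSat3 E) (hcard : 5 ≤ Fintype.card V)
    (u v : V) (huv : u ≠ v) (hcod : codeg E u v = 2) (hdv : deg E v = 2) :
    ¬ ∃ w : V, w ≠ u ∧ w ≠ v ∧ deg E w = 2 ∧ 2 ≤ codeg E u w :=
  unique_deg_two_double_neighbor_general E hsat u v huv hcod hdv
end

section
/- Let G be a C_3^{(3)}-saturated 3-uniform hypergraph on n ≥ 5 vertices and let v be a vertex. Then no edge e ∈ E(G) with v ∉ e contains two distinct vertices u_1, u_2 ∈ N(v) with d(u_1) = d(u_2) = 2. -/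
open Finset

variable {V : Type*}

/-! If `u₁, u₂ ∈ e` have degree 2 and `v ∉ e` is a common neighbour, the only edges at `uᵢ` are
`e` and an edge `fᵢ ∋ v`. A triple `t ⊇ {u₁, u₂}` that every edge through `u₁` or `u₂` meets in a
second vertex cannot close a `C₃⁽³⁾` when added, since both other edges of the cycle would meet
`t` exactly in its third vertex; by saturation such a triple is an edge. Applied to
`t = {u₁, u₂, v}` this forces `f₁ = f₂ = {u₁, u₂, v}`; then `t = {u₁, u₂, z}` with `z ∉ e ∪ {v}`
(available as `n ≥ 5`) is an edge through `u₁` other than `e` and `f₁`, contradicting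
`deg u₁ = 2`. -/

lemma Finset.eq_or_eq_of_card_filter_eq_two {α : Type*} [DecidableEq α] {s : Finset α}
    {p : α → Prop} [DecidablePred p] (h : #(s.filter p) = 2) {a b : α} (ha : a ∈ s) (hb : b ∈ s)
    (hpa : p a) (hpb : p b) (hab : a ≠ b) : ∀ x ∈ s, p x → x = a ∨ x = b := by
  intro x hx hpx
  have hsub : {a, b} ⊆ s.filter p := insert_subset_iff.mpr
    ⟨mem_filter.mpr ⟨ha, hpa⟩, singleton_subset_iff.mpr (mem_filter.mpr ⟨hb, hpb⟩)⟩
  have heq : s.filter p = {a, b} :=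
    (eq_of_subset_of_card_le hsub (by rw [h, card_pair hab])).symm
  simpa [heq] using mem_filter.mpr ⟨hx, hpx⟩

section

variable [DecidableEq V] {E : Finset (Finset V)}

lemma eq_or_eq_of_deg_eq_two_s5 {u : V} (hu : deg E u = 2) {e f : Finset V} (he : e ∈ E)
    (hf : f ∈ E) (hue : u ∈ e) (huf : u ∈ f) (hef : e ≠ f) : ∀ g ∈ E, u ∈ g → g = e ∨ g = f :=
  eq_or_eq_of_card_filter_eq_two hu he hf hue huf hef

/-- The three edges of a copy of `C₃⁽³⁾` are distinct, so a copy created by adding `t` uses `t`. -/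
lemma HasC3.exists_inter_eq_singleton_of_insert {t : Finset V} (h : HasC3 (insert t E))
    (hE : ¬ HasC3 E) :
    ∃ g₁ ∈ E, ∃ g₂ ∈ E, ∃ a c : V, a ≠ c ∧ t ∩ g₁ = {a} ∧ t ∩ g₂ = {c} := by
  obtain ⟨e₁, he₁, e₂, he₂, e₃, he₃, a, b, c, h₁₂, h₂₃, h₁₃, hab, hbc, hac, h₁₂₃⟩ := h
  have mem : ∀ {s t : Finset V} {x : V}, s ∩ t = {x} → x ∈ s ∧ x ∈ t := fun h =>
    mem_inter.mp (h ▸ mem_singleton_self _)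
  have ne₁₂ : e₁ ≠ e₂ := by
    rintro rfl
    rw [inter_self] at h₁₂
    exact hac (mem_singleton.mp (h₁₂ ▸ (mem h₁₃).1)).symm
  have ne₂₃ : e₂ ≠ e₃ := by
    rintro rfl
    rw [inter_self] at h₂₃
    exact hab (mem_singleton.mp (h₂₃ ▸ (mem h₁₂).2))
  have ne₁₃ : e₁ ≠ e₃ := by
    rintro rfl
    rw [inter_self] at h₁₃
    exact hac (mem_singleton.mp (h₁₃ ▸ (mem h₁₂).1))
  rw [mem_insert] at he₁ he₂ he₃
  rcases he₁ with rfl | he₁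
  · exact ⟨e₂, he₂.resolve_left (Ne.symm ne₁₂), e₃, he₃.resolve_left (Ne.symm ne₁₃),
      a, c, hac, h₁₂, h₁₃⟩
  rcases he₂ with rfl | he₂
  · exact ⟨e₁, he₁, e₃, he₃.resolve_left (Ne.symm ne₂₃), a, b, hab, by rwa [inter_comm], h₂₃⟩
  rcases he₃ with rfl | he₃
  · exact ⟨e₁, he₁, e₂, he₂, c, b, hbc.symm, by rwa [inter_comm], by rwa [inter_comm]⟩
  exact absurd ⟨e₁, he₁, e₂, he₂, e₃, he₃, a, b, c, h₁₂, h₂₃, h₁₃, hab, hbc, hac, h₁₂₃⟩ hE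

lemma eq_of_insert_insert_inter_eq_singleton {u₁ u₂ w y : V} {g : Finset V} (hne : u₁ ≠ u₂)
    (h₁ : u₁ ∈ g → u₂ ∈ g ∨ w ∈ g) (h₂ : u₂ ∈ g → u₁ ∈ g ∨ w ∈ g)
    (h : {u₁, u₂, w} ∩ g = {y}) : y = w := by
  have hmem : ∀ x, x ∈ ({u₁, u₂, w} : Finset V) → x ∈ g → x = y := fun x hx hxg =>
    mem_singleton.mp (h ▸ mem_inter.mpr ⟨hx, hxg⟩)
  have hy : y ∈ ({u₁, u₂, w} : Finset V) ∩ g := h ▸ mem_singleton_self y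
  simp only [mem_inter, mem_insert, mem_singleton] at hy hmem
  grind

theorem IsSat3.insert_insert_mem {u₁ u₂ w : V} (hE : IsSat3 E) (hne : u₁ ≠ u₂)
    (hw₁ : w ≠ u₁) (hw₂ : w ≠ u₂)
    (h₁ : ∀ g ∈ E, u₁ ∈ g → u₂ ∈ g ∨ w ∈ g) (h₂ : ∀ g ∈ E, u₂ ∈ g → u₁ ∈ g ∨ w ∈ g) :
    {u₁, u₂, w} ∈ E := by
  by_contra ht
  have hcard : #{u₁, u₂, w} = 3 := card_eq_three.mpr ⟨u₁, u₂, w, hne, hw₁.symm, hw₂.symm, rfl⟩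
  obtain ⟨g₁, hg₁, g₂, hg₂, a, c, hac, ha, hc⟩ :=
    (hE.2.2 _ hcard ht).exists_inter_eq_singleton_of_insert hE.2.1
  exact hac <| (eq_of_insert_insert_inter_eq_singleton hne (h₁ g₁ hg₁) (h₂ g₁ hg₁) ha).trans
    (eq_of_insert_insert_inter_eq_singleton hne (h₁ g₂ hg₂) (h₂ g₂ hg₂) hc).symm

lemma IsUniform3.exists_ne_notMem [Fintype V] (hE : IsUniform3 E) (hV : 5 ≤ Fintype.card V)
    {e : Finset V} (he : e ∈ E) (v : V) : ∃ z, z ≠ v ∧ z ∉ e := by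
  obtain ⟨z, -, hz⟩ : ∃ z ∈ univ, z ∉ insert v e := exists_mem_notMem_of_card_lt_card <|
    calc #(insert v e) ≤ #e + 1 := card_insert_le v e
      _ < #(univ : Finset V) := by rw [hE e he, card_univ]; omega
  exact ⟨z, not_or.mp (mem_insert.not.mp hz)⟩

end

theorem no_two_deg_two_neighbors_in_edge {V : Type*} [Fintype V] [DecidableEq V]
    (E : Finset (Finset V)) (hsat : IsSat3 E) (hcard : 5 ≤ Fintype.card V)
    (v : V) (e : Finset V) (he : e ∈ E) (hve : v ∉ e) :
    ¬ ∃ u₁ u₂ : V, u₁ ≠ u₂ ∧ u₁ ∈ e ∧ u₂ ∈ e ∧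
      Adj E v u₁ ∧ Adj E v u₂ ∧ deg E u₁ = 2 ∧ deg E u₂ = 2 := by
  rintro ⟨u₁, u₂, hne, hu₁e, hu₂e, ⟨hvu₁, f₁, hf₁, hvf₁, hu₁f₁⟩, ⟨hvu₂, f₂, hf₂, hvf₂, hu₂f₂⟩,
    hd₁, hd₂⟩
  have edges₁ := eq_or_eq_of_deg_eq_two_s5 hd₁ he hf₁ hu₁e hu₁f₁ (ne_of_mem_of_not_mem' hvf₁ hve).symm
  have edges₂ := eq_or_eq_of_deg_eq_two_s5 hd₂ he hf₂ hu₂e hu₂f₂ (ne_of_mem_of_not_mem' hvf₂ hve).symm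
  by_cases ht : {u₁, u₂, v} ∈ E
  · have hf₁ : f₁ = {u₁, u₂, v} :=
      ((edges₁ _ ht (by simp)).resolve_left (ne_of_mem_of_not_mem' (by simp) hve)).symm
    have hf₂ : f₂ = {u₁, u₂, v} :=
      ((edges₂ _ ht (by simp)).resolve_left (ne_of_mem_of_not_mem' (by simp) hve)).symm
    obtain ⟨z, hzv, hze⟩ := hsat.1.exists_ne_notMem hcard he v
    have hz₁ : z ≠ u₁ := (ne_of_mem_of_not_mem hu₁e hze).symm
    have hz₂ : z ≠ u₂ := (ne_of_mem_of_not_mem hu₂e hze).symm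
    have hzf₁ : z ∉ f₁ := by simp [hf₁, hz₁, hz₂, hzv]
    have hzt : {u₁, u₂, z} ∈ E := hsat.insert_insert_mem hne hz₁ hz₂
      (fun g hg hu₁g => by rcases edges₁ g hg hu₁g with rfl | rfl <;> simp [hu₂e, hf₁])
      (fun g hg hu₂g => by rcases edges₂ g hg hu₂g with rfl | rfl <;> simp [hu₁e, hf₂])
    rcases edges₁ _ hzt (by simp) with h | h
    exacts [hze (h ▸ by simp), hzf₁ (h ▸ by simp)]
  · exact ht (hsat.insert_insert_mem hne hvu₁ hvu₂
      (fun g hg hu₁g => by rcases edges₁ g hg hu₁g with rfl | rfl <;> simp [hu₂e, hvf₁])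
      (fun g hg hu₂g => by rcases edges₂ g hg hu₂g with rfl | rfl <;> simp [hu₁e, hvf₂]))
end

section
/- Let G be a C_3^{(3)}-saturated 3-uniform hypergraph. If {a,b,c} ∈ E(G) and ab is a good pair (i.e., there exists an a,b-link in G), then c is a double neighbor of a or of b; that is, d(ac) ≥ 2 or d(bc) ≥ 2. -/
open Finset

variable {V : Type*}

section

variable [DecidableEq V]

lemma two_le_codeg_of_ne {E : Finset (Finset V)} {u v : V} {e f : Finset V}
    (he : e ∈ E) (hf : f ∈ E) (hue : u ∈ e) (hve : v ∈ e) (huf : u ∈ f) (hvf : v ∈ f)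
    (hef : e ≠ f) : 2 ≤ codeg E u v :=
  one_lt_card_iff.2 ⟨e, f, mem_filter.2 ⟨he, hue, hve⟩, mem_filter.2 ⟨hf, huf, hvf⟩, hef⟩

/-- In a loose triangle the triple intersection is automatically empty. -/
lemma hasC3_of_inter_eq_singleton {E : Finset (Finset V)} {e₁ e₂ e₃ : Finset V}
    (h₁ : e₁ ∈ E) (h₂ : e₂ ∈ E) (h₃ : e₃ ∈ E) {a b c : V}
    (h₁₂ : e₁ ∩ e₂ = {a}) (h₂₃ : e₂ ∩ e₃ = {b}) (h₁₃ : e₁ ∩ e₃ = {c})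
    (hab : a ≠ b) (hbc : b ≠ c) (hac : a ≠ c) : HasC3 E := by
  refine ⟨e₁, h₁, e₂, h₂, e₃, h₃, a, b, c, h₁₂, h₂₃, h₁₃, hab, hbc, hac, ?_⟩
  refine eq_empty_of_forall_notMem fun x hx => hab ?_
  obtain ⟨⟨hx₁, hx₂⟩, hx₃⟩ : (x ∈ e₁ ∧ x ∈ e₂) ∧ x ∈ e₃ := by simpa only [mem_inter] using hx
  have hxa : x = a := mem_singleton.1 (h₁₂ ▸ mem_inter.2 ⟨hx₁, hx₂⟩)
  have hxb : x = b := mem_singleton.1 (h₂₃ ▸ mem_inter.2 ⟨hx₂, hx₃⟩)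
  exact hxa ▸ hxb

lemma inter_triple_eq_singleton {s : Finset V} {a b c : V}
    (ha : a ∈ s) (hb : b ∉ s) (hc : c ∉ s) : s ∩ {a, b, c} = {a} := by
  rw [inter_insert_of_mem ha, inter_insert_of_notMem hb, inter_singleton_of_notMem hc]
  rfl

end

theorem good_pair_double_neighbor {V : Type*} [DecidableEq V]
    (E : Finset (Finset V)) (hsat : IsSat3 E) (a b c : V)
    (he : ({a, b, c} : Finset V) ∈ E) (hgood : GoodPair E a b) :
    2 ≤ codeg E a c ∨ 2 ≤ codeg E b c := by
  obtain ⟨e₁, e₂, h₁, h₂, ha₁, hb₂, ha₂, hb₁, w, hw, h₁₂⟩ := hgood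
  have hab : a ≠ b := fun h => hb₁ (h ▸ ha₁)
  obtain ⟨hwa, hwb⟩ : w ≠ a ∧ w ≠ b := by simpa using hw
  by_cases hc₁ : c ∈ e₁
  · exact .inl <| two_le_codeg_of_ne he h₁ (by simp) (by simp) ha₁ hc₁
      fun h => hb₁ (h ▸ by simp)
  by_cases hc₂ : c ∈ e₂
  · exact .inr <| two_le_codeg_of_ne he h₂ (by simp) (by simp) hb₂ hc₂
      fun h => ha₂ (h ▸ by simp)
  -- `e₁`, `{a, b, c}`, `e₂` would form a loose triangle through `a`, `b`, `w`.
  refine absurd ?_ hsat.2.1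
  refine hasC3_of_inter_eq_singleton h₁ he h₂ (inter_triple_eq_singleton ha₁ hb₁ hc₁) ?_ h₁₂
    hab hwb.symm hwa.symm
  rw [inter_comm, insert_comm]
  exact inter_triple_eq_singleton hb₂ ha₂ hc₂
end

section
/- Let (ℓ_n) be a sequence of positive integers with ℓ_n → ∞ and ℓ_n^3/n → 0. Then there exists n_0 such that for every n ≥ n_0 the following holds: if G is a C_3^{(3)}-saturated 3-uniform hypergraph on n vertices with |E(G)| ≤ 2n, H = {v ∈ V(G) : d(v) ≥ n/ℓ_n^2}, Q is the set of vertices having at least two neighbors in H, and S = V(G) \ (Q ∪ H), then there exist two vertices x, y ∈ V(G) with x ∈ H such that |S \ N({x,y})| ≤ 20n/ℓ_n. -/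
open Finset

variable {V : Type*}

/-!
Write `L = ℓ n`. At most `6n/L` vertices of `S` have degree above `L`, so unless `S` is already
small its low-degree part `S₀` has at least `13n/L` vertices.

If two vertices `u, v ∈ S₀` are neither adjacent nor joined by a link, then adding the triple
`{u, v, w}` must create a loose triangle, which links `w` to `u` or to `v`. So every vertex is
at distance two from `u` or `v` through some middle vertex `m ∈ N(u) ∪ N(v)`. The at most `4L`
middle vertices outside `H` reach at most `8n/L` vertices. Since `u, v ∈ S`, at most two middle
vertices lie in `H`, and these are `x` and `y`.

Otherwise every non-adjacent pair of `S₀` has a common neighbour. Each vertex of `S` sees at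
most one vertex of `H`, and vertices outside `H` have few neighbours. Double counting the pairs
of `S₀` therefore gives a single `x ∈ H` adjacent to all but `2n/L` vertices of `S₀`.
-/


section

variable [DecidableEq V] {E : Finset (Finset V)}

def nbhd (E : Finset (Finset V)) (v : V) : Finset V :=
  (E.filter fun e => v ∈ e).biUnion fun e => e.erase v

lemma mem_nbhd {u v : V} : u ∈ nbhd E v ↔ u ≠ v ∧ ∃ e ∈ E, v ∈ e ∧ u ∈ e := by
  simp only [nbhd, mem_biUnion, mem_filter, mem_erase]
  tauto

lemma mem_nbhd_comm {u v : V} : u ∈ nbhd E v ↔ v ∈ nbhd E u := by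
  simp only [mem_nbhd, ne_comm (a := u)]
  constructor <;> exact fun ⟨h, e, he, h₁, h₂⟩ => ⟨h, e, he, h₂, h₁⟩

lemma mem_nbhd_iff_adj {u v : V} : u ∈ nbhd E v ↔ Adj E v u := by
  rw [mem_nbhd, Adj, ne_comm]

lemma card_nbhd_le (hE : IsUniform3 E) (v : V) : (nbhd E v).card ≤ 2 * deg E v := by
  refine card_biUnion_le.trans ?_
  rw [deg, card_eq_sum_ones (E.filter _), mul_sum]
  refine sum_le_sum fun e he => ?_
  rw [mem_filter] at he
  rw [card_erase_of_mem he.2, hE e he.1]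
  rfl

lemma card_nbhd_le_of_deg_le (hE : IsUniform3 E) {v : V} {D : ℝ} (hv : (deg E v : ℝ) ≤ D) :
    ((nbhd E v).card : ℝ) ≤ 2 * D := by
  have : ((nbhd E v).card : ℝ) ≤ 2 * deg E v := by exact_mod_cast card_nbhd_le hE v
  linarith

lemma card_biUnion_nbhd_le (hE : IsUniform3 E) (B : Finset V) {D : ℝ}
    (hB : ∀ m ∈ B, (deg E m : ℝ) ≤ D) : ((B.biUnion (nbhd E)).card : ℝ) ≤ B.card * (2 * D) := by
  calc ((B.biUnion (nbhd E)).card : ℝ) ≤ ∑ m ∈ B, ((nbhd E m).card : ℝ) := by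
        exact_mod_cast card_biUnion_le
    _ ≤ ∑ _m ∈ B, 2 * D := sum_le_sum fun m hm => card_nbhd_le_of_deg_le hE (hB m hm)
    _ = B.card * (2 * D) := by rw [sum_const, nsmul_eq_mul]

lemma sum_card_nbhd_inter_le {A H : Finset V} (hA : ∀ a ∈ A, (nbhd E a ∩ H).card ≤ 1) :
    ∑ m ∈ H, (nbhd E m ∩ A).card ≤ A.card := by
  have hdisj : (H : Set V).PairwiseDisjoint fun m => nbhd E m ∩ A := by
    intro m₁ hm₁ m₂ hm₂ hne
    refine disjoint_left.2 fun a ha₁ ha₂ => hne ?_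
    rw [mem_inter, mem_nbhd_comm] at ha₁ ha₂
    exact card_le_one.1 (hA a ha₁.2) m₁ (mem_inter.2 ⟨ha₁.1, hm₁⟩) m₂ (mem_inter.2 ⟨ha₂.1, hm₂⟩)
  rw [← card_biUnion hdisj]
  exact card_le_card (biUnion_subset.2 fun m _ => inter_subset_right)

/-- `N({x, y})`. -/
def pairNbhd (E : Finset (Finset V)) (x y : V) : Finset V :=
  (nbhd E x ∪ nbhd E y) \ {x, y}

lemma coe_pairNbhd (x y : V) : (pairNbhd E x y : Set V) =
    {u | u ∉ ({x, y} : Set V) ∧ ∃ e ∈ E, u ∈ e ∧ (x ∈ e ∨ y ∈ e)} := by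
  ext u
  grind [pairNbhd, mem_nbhd]

lemma sdiff_pairNbhd_self_subset (S A : Finset V) (m : V) :
    S \ pairNbhd E m m ⊆ insert m ((S \ A) ∪ (A \ nbhd E m)) := by
  intro z hz
  obtain ⟨hzS, hzN⟩ := mem_sdiff.1 hz
  by_cases hzm : z = m
  · exact hzm ▸ mem_insert_self _ _
  have hzN' : z ∉ nbhd E m := fun h => hzN (by simp [pairNbhd, h, hzm])
  by_cases hzA : z ∈ A <;> simp [hzS, hzA, hzN']

lemma exists_pair_superset {K H : Finset V} (hKH : K ⊆ H) (hK : K.card ≤ 2) {x₀ : V}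
    (hx₀ : H.Nonempty → x₀ ∈ H) : ∃ x y, K ⊆ {x, y} ∧ (H.Nonempty → x ∈ H) := by
  obtain rfl | ⟨x, hx⟩ := K.eq_empty_or_nonempty
  · exact ⟨x₀, x₀, empty_subset _, hx₀⟩
  have : (K.erase x).card ≤ 1 := by rw [card_erase_of_mem hx]; omega
  obtain ⟨y, hy⟩ := (@card_le_one_iff_subset_singleton _ _ ⟨x⟩).1 this
  refine ⟨x, y, fun z hz => ?_, fun _ => hKH hx⟩
  by_cases hzx : z = x
  · simp [hzx]
  · simpa using Or.inr (hy (mem_erase.2 ⟨hzx, hz⟩))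

lemma GoodPair.symm {a b : V} (h : GoodPair E a b) : GoodPair E b a := by
  obtain ⟨f, g, hf, hg, ha, hb, hag, hbf, w, hw, hfg⟩ := h
  refine ⟨g, f, hg, hf, hb, ha, hbf, hag, w, ?_, by rw [inter_comm, hfg]⟩
  rw [pair_comm]
  exact hw

lemma GoodPair.exists_common_nbhd {a b : V} (h : GoodPair E a b) :
    ∃ m, a ∈ nbhd E m ∧ b ∈ nbhd E m := by
  obtain ⟨f, g, hf, hg, ha, hb, -, -, w, hw, hfg⟩ := h
  have hw' : w ∈ f ∩ g := hfg ▸ mem_singleton_self w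
  simp only [mem_insert, mem_singleton, not_or] at hw
  exact ⟨w, mem_nbhd.2 ⟨Ne.symm hw.1, f, hf, (mem_inter.1 hw').1, ha⟩,
    mem_nbhd.2 ⟨Ne.symm hw.2, g, hg, (mem_inter.1 hw').2, hb⟩⟩

lemma goodPair_of_triangle {e f g : Finset V} (hf : f ∈ E) (hg : g ∈ E) {α β μ : V}
    (hef : e ∩ f = {α}) (heg : e ∩ g = {β}) (hfg : f ∩ g = {μ})
    (hαβ : α ≠ β) (hμα : μ ≠ α) (hμβ : μ ≠ β) : α ∈ e ∧ β ∈ e ∧ GoodPair E α β := by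
  have hα : α ∈ e ∩ f := hef ▸ mem_singleton_self α
  have hβ : β ∈ e ∩ g := heg ▸ mem_singleton_self β
  rw [mem_inter] at hα hβ
  have hαg : α ∉ g := fun h => hαβ (by simpa [heg] using mem_inter.2 ⟨hα.1, h⟩)
  have hβf : β ∉ f := fun h => hαβ (by simpa [hef, eq_comm] using mem_inter.2 ⟨hβ.1, h⟩)
  exact ⟨hα.1, hβ.1, f, g, hf, hg, hα.2, hβ.2, hαg, hβf, μ, by simp [hμα, hμβ], hfg⟩

lemma goodPair_of_mem_triple {u v w α β : V} (hα : α ∈ ({u, v, w} : Finset V))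
    (hβ : β ∈ ({u, v, w} : Finset V)) (hαβ : α ≠ β) (h : GoodPair E α β) :
    GoodPair E u v ∨ GoodPair E u w ∨ GoodPair E v w := by
  simp only [mem_insert, mem_singleton] at hα hβ
  rcases hα with rfl | rfl | rfl <;> rcases hβ with rfl | rfl | rfl <;>
    first
      | exact absurd rfl hαβ
      | simp only [h, GoodPair.symm h, true_or, or_true]

/-- Adding `{u, v, w}` creates a loose triangle. As `E` has none, exactly one of its edges is
the new triple, and the other two link two of `u, v, w`. -/
lemma IsSat3.goodPair_of_not_adj (hs : IsSat3 E) {u v w : V}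
    (huv : u ≠ v) (huw : u ≠ w) (hvw : v ≠ w) (hadj : ¬ Adj E u v) :
    GoodPair E u v ∨ GoodPair E u w ∨ GoodPair E v w := by
  set e : Finset V := {u, v, w}
  have he : e.card = 3 := card_eq_three.2 ⟨u, v, w, huv, huw, hvw, rfl⟩
  have heE : e ∉ E := fun h => hadj ⟨huv, e, h, by simp [e], by simp [e]⟩
  obtain ⟨e₁, h₁, e₂, h₂, e₃, h₃, a, b, c, h12, h23, h13, hab, hbc, hac, h123⟩ :=
    hs.2.2 e he heE
  have hne : ∀ {f g : Finset V} {x : V}, f ∩ g = {x} → f = e → g ≠ e := by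
    rintro f g x hfg rfl rfl
    rw [inter_self] at hfg
    rw [hfg, card_singleton] at he
    exact absurd he (by decide)
  rw [mem_insert] at h₁ h₂ h₃
  rcases h₁ with rfl | h₁
  · obtain ⟨hα, hβ, hgood⟩ := goodPair_of_triangle (h₂.resolve_left (hne h12 rfl))
      (h₃.resolve_left (hne h13 rfl)) h12 h13 h23 hac hab.symm hbc
    exact goodPair_of_mem_triple hα hβ hac hgood
  rcases h₂ with rfl | h₂
  · rw [inter_comm] at h12
    obtain ⟨hα, hβ, hgood⟩ := goodPair_of_triangle h₁ (h₃.resolve_left (hne h23 rfl))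
      h12 h23 h13 hab (Ne.symm hac) (Ne.symm hbc)
    exact goodPair_of_mem_triple hα hβ hab hgood
  rcases h₃ with rfl | h₃
  · rw [inter_comm] at h13 h23
    obtain ⟨hα, hβ, hgood⟩ := goodPair_of_triangle h₁ h₂ h13 h23 h12 (Ne.symm hbc) hac hab
    exact goodPair_of_mem_triple hα hβ (Ne.symm hbc) hgood
  exact absurd ⟨e₁, h₁, e₂, h₂, e₃, h₃, a, b, c, h12, h23, h13, hab, hbc, hac, h123⟩ hs.2.1

lemma IsSat3.exists_mem_nbhd_of_not_goodPair (hs : IsSat3 E) {u v w : V} (huv : u ≠ v)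
    (hadj : ¬ Adj E u v) (hgood : ¬ GoodPair E u v) (hwu : w ≠ u) (hwv : w ≠ v) :
    ∃ m ∈ nbhd E u ∪ nbhd E v, w ∈ nbhd E m := by
  rcases hs.goodPair_of_not_adj huv (Ne.symm hwu) (Ne.symm hwv) hadj with h | h | h
  · exact absurd h hgood
  all_goals
    obtain ⟨m, hm, hwm⟩ := h.exists_common_nbhd
    exact ⟨m, by simp [mem_nbhd_comm.1 hm], hwm⟩

variable [Fintype V]

lemma sum_deg (hE : IsUniform3 E) : ∑ v, deg E v = 3 * E.card := by
  simp only [deg, card_filter]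
  rw [sum_comm, mul_comm, ← smul_eq_mul, ← sum_const]
  refine sum_congr rfl fun e he => ?_
  rw [sum_ite_mem, univ_inter, ← card_eq_sum_ones, hE e he]

lemma sum_card_nbhd_le (hE : IsUniform3 E) : ∑ v, (nbhd E v).card ≤ 6 * E.card := by
  calc ∑ v, (nbhd E v).card ≤ ∑ v, 2 * deg E v := sum_le_sum fun v _ => card_nbhd_le hE v
    _ = 6 * E.card := by rw [← mul_sum, sum_deg hE]; ring

lemma card_mul_le_of_lt_deg (hE : IsUniform3 E) {s : Finset V} {L : ℕ}
    (hs : ∀ v ∈ s, L < deg E v) : s.card * L ≤ 3 * E.card := by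
  rw [← sum_deg hE, ← smul_eq_mul]
  calc _ ≤ ∑ v ∈ s, deg E v := card_nsmul_le_sum _ _ _ fun v hv => (hs v hv).le
    _ ≤ ∑ v, deg E v := sum_le_sum_of_subset (subset_univ _)

lemma card_compl_pairNbhd_ge (hE : IsUniform3 E) {D : ℝ} (hD : ∀ v, (deg E v : ℝ) ≤ D)
    (x y : V) : (Fintype.card V : ℝ) - 4 * D ≤ (pairNbhd E x y)ᶜ.card := by
  have hP : ((pairNbhd E x y).card : ℝ) ≤ (nbhd E x).card + (nbhd E y).card := by
    exact_mod_cast (card_le_card sdiff_subset).trans (card_union_le _ _)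
  have hsum : ((pairNbhd E x y).card : ℝ) + (pairNbhd E x y)ᶜ.card = Fintype.card V := by
    exact_mod_cast card_add_card_compl _
  linarith [card_nbhd_le_of_deg_le hE (hD x), card_nbhd_le_of_deg_le hE (hD y)]

/-- By saturation every vertex other than `u, v` is at distance two from `u` or `v`. Middle
vertices outside `H` have few neighbours, and those in `H` are `x` or `y`. -/
lemma IsSat3.card_compl_pairNbhd_le (hs : IsSat3 E) {u v : V} (huv : u ≠ v)
    (hadj : ¬ Adj E u v) (hgood : ¬ GoodPair E u v) {L : ℕ} (hu : deg E u ≤ L)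
    (hv : deg E v ≤ L) {H : Finset V} {D : ℝ} (hD0 : 0 ≤ D)
    (hD : ∀ m ∉ H, (deg E m : ℝ) ≤ D) {x y : V} (hxy : (nbhd E u ∪ nbhd E v) ∩ H ⊆ {x, y}) :
    ((pairNbhd E x y)ᶜ.card : ℝ) ≤ 4 + 8 * L * D := by
  set B := (nbhd E u ∪ nbhd E v) \ H
  have hcover : (pairNbhd E x y)ᶜ ⊆ {u, v, x, y} ∪ B.biUnion (nbhd E) := by
    intro w hw
    by_cases hw4 : w ∈ ({u, v, x, y} : Finset V)
    · exact mem_union_left _ hw4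
    simp only [mem_insert, mem_singleton, not_or] at hw4
    obtain ⟨hwu, hwv, hwx, hwy⟩ := hw4
    obtain ⟨m, hm, hwm⟩ := hs.exists_mem_nbhd_of_not_goodPair huv hadj hgood hwu hwv
    by_cases hmH : m ∈ H
    · have : m = x ∨ m = y := by simpa using hxy (mem_inter.2 ⟨hm, hmH⟩)
      refine absurd ?_ (mem_compl.1 hw)
      rcases this with rfl | rfl <;> simp [pairNbhd, hwm, hwx, hwy]
    · exact mem_union_right _ (mem_biUnion.2 ⟨m, mem_sdiff.2 ⟨hm, hmH⟩, hwm⟩)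
  have hB : (B.card : ℝ) ≤ 4 * L := by
    have : B.card ≤ (nbhd E u).card + (nbhd E v).card :=
      (card_le_card sdiff_subset).trans (card_union_le _ _)
    have := card_nbhd_le hs.1 u
    have := card_nbhd_le hs.1 v
    exact_mod_cast (show B.card ≤ 4 * L by omega)
  have hT := card_biUnion_nbhd_le hs.1 B fun m hm => hD m (mem_sdiff.1 hm).2
  have h4 : (({u, v, x, y} : Finset V).card : ℝ) ≤ 4 := by exact_mod_cast card_le_four
  calc ((pairNbhd E x y)ᶜ.card : ℝ) ≤ (({u, v, x, y} : Finset V) ∪ B.biUnion (nbhd E)).card := by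
        exact_mod_cast card_le_card hcover
    _ ≤ (({u, v, x, y} : Finset V).card : ℝ) + (B.biUnion (nbhd E)).card := by
        exact_mod_cast card_union_le _ _
    _ ≤ 4 + 8 * L * D := by nlinarith

lemma IsSat3.exists_card_compl_pairNbhd_le (hs : IsSat3 E) {u v : V} (huv : u ≠ v)
    (hadj : ¬ Adj E u v) (hgood : ¬ GoodPair E u v) {L : ℕ} (hu : deg E u ≤ L)
    (hv : deg E v ≤ L) {H : Finset V} (hu₁ : (nbhd E u ∩ H).card ≤ 1)
    (hv₁ : (nbhd E v ∩ H).card ≤ 1) {D : ℝ} (hD0 : 0 ≤ D) (hD : ∀ m ∉ H, (deg E m : ℝ) ≤ D)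
    {x₀ : V} (hx₀ : H.Nonempty → x₀ ∈ H) :
    ∃ x y, (H.Nonempty → x ∈ H) ∧ ((pairNbhd E x y)ᶜ.card : ℝ) ≤ 4 + 8 * L * D := by
  have hK : ((nbhd E u ∪ nbhd E v) ∩ H).card ≤ 2 := by
    rw [union_inter_distrib_right]
    exact (card_union_le _ _).trans (add_le_add hu₁ hv₁)
  obtain ⟨x, y, hxy, hx⟩ := exists_pair_superset inter_subset_right hK hx₀
  exact ⟨x, y, hx, hs.card_compl_pairNbhd_le huv hadj hgood hu hv hD0 hD hxy⟩

/-- Each pair of `A` is diagonal, lies in an edge, or has a common neighbour `m`. -/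
lemma sq_card_le_of_goodPair (hE : IsUniform3 E) (A : Finset V)
    (hgood : ∀ a ∈ A, ∀ b ∈ A, a ≠ b → ¬ Adj E a b → GoodPair E a b) :
    A.card ^ 2 ≤ A.card + 9 * E.card + ∑ m, (nbhd E m ∩ A).card ^ 2 := by
  have hcover : A ×ˢ A ⊆ A.diag ∪ E.biUnion (fun e => e ×ˢ e) ∪
      univ.biUnion (fun m => (nbhd E m ∩ A) ×ˢ (nbhd E m ∩ A)) := by
    rintro ⟨a, b⟩ hab
    rw [mem_product] at hab
    by_cases heq : a = b
    · exact mem_union_left _ (mem_union_left _ (mem_diag.2 ⟨hab.1, heq⟩))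
    by_cases hadj : Adj E a b
    · obtain ⟨-, e, he, ha, hb⟩ := hadj
      exact mem_union_left _ (mem_union_right _ (mem_biUnion.2 ⟨e, he, mem_product.2 ⟨ha, hb⟩⟩))
    obtain ⟨m, ha, hb⟩ := (hgood a hab.1 b hab.2 heq hadj).exists_common_nbhd
    exact mem_union_right _ (mem_biUnion.2 ⟨m, mem_univ m,
      mem_product.2 ⟨mem_inter.2 ⟨ha, hab.1⟩, mem_inter.2 ⟨hb, hab.2⟩⟩⟩)
  have hedges : ∑ e ∈ E, (e ×ˢ e).card = 9 * E.card := by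
    rw [mul_comm, ← smul_eq_mul, ← sum_const]
    exact sum_congr rfl fun e he => by rw [card_product, hE e he]
  calc A.card ^ 2 = (A ×ˢ A).card := by rw [card_product, sq]
    _ ≤ _ := (card_le_card hcover).trans ((card_union_le _ _).trans
        (add_le_add ((card_union_le _ _).trans (add_le_add (diag_card A).le card_biUnion_le))
          card_biUnion_le))
    _ = A.card + 9 * E.card + ∑ m, (nbhd E m ∩ A).card ^ 2 := by
        simp only [← hedges, card_product, sq]

/-- The common neighbours in `H` see disjoint parts of `A` and those outside `H` see at most
`2D` vertices each, so unless some vertex of `H` sees almost all of `A` the common neighbours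
account for too few pairs. -/
lemma exists_card_lt_card_nbhd_inter_add (hE : IsUniform3 E) {A H : Finset V}
    (hgood : ∀ a ∈ A, ∀ b ∈ A, a ≠ b → ¬ Adj E a b → GoodPair E a b)
    (hA : ∀ a ∈ A, (nbhd E a ∩ H).card ≤ 1) {D t : ℝ} (hD0 : 0 ≤ D)
    (hD : ∀ m ∉ H, (deg E m : ℝ) ≤ D) (ht : t ≤ A.card)
    (hbig : A.card + 9 * E.card + 12 * D * E.card < t * A.card) :
    ∃ m ∈ H, (A.card : ℝ) < (nbhd E m ∩ A).card + t := by
  by_contra! hsmall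
  set a : V → ℝ := fun m => ((nbhd E m ∩ A).card : ℝ)
  have ha0 : ∀ m, 0 ≤ a m := fun m => Nat.cast_nonneg _
  have hcount : (A.card : ℝ) ^ 2 ≤ A.card + 9 * E.card + ∑ m, a m ^ 2 := by
    simp only [a]; exact_mod_cast sq_card_le_of_goodPair hE A hgood
  have hH : ∑ m ∈ H, a m ^ 2 ≤ (A.card - t) * A.card :=
    calc ∑ m ∈ H, a m ^ 2 ≤ ∑ m ∈ H, (A.card - t) * a m :=
          sum_le_sum fun m hm => by
            rw [sq]; exact mul_le_mul_of_nonneg_right (by linarith [hsmall m hm]) (ha0 m)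
      _ = (A.card - t) * ∑ m ∈ H, a m := (mul_sum _ _ _).symm
      _ ≤ (A.card - t) * A.card := mul_le_mul_of_nonneg_left
          (by simp only [a]; exact_mod_cast sum_card_nbhd_inter_le hA) (by linarith)
  have hHc : ∑ m ∈ Hᶜ, a m ^ 2 ≤ 12 * D * E.card :=
    calc ∑ m ∈ Hᶜ, a m ^ 2 ≤ ∑ m ∈ Hᶜ, 2 * D * (nbhd E m).card :=
          sum_le_sum fun m hm => by
            have h2D := card_nbhd_le_of_deg_le hE (hD m (mem_compl.1 hm))
            have hN : a m ≤ (nbhd E m).card := by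
              simp only [a]; exact_mod_cast card_le_card inter_subset_left
            rw [sq]; exact mul_le_mul (by linarith) hN (ha0 m) (by linarith)
      _ ≤ ∑ m, 2 * D * (nbhd E m).card :=
          sum_le_sum_of_subset_of_nonneg (subset_univ _) fun m _ _ => by positivity
      _ ≤ 2 * D * (6 * E.card) := by
          rw [← mul_sum]
          exact mul_le_mul_of_nonneg_left (by exact_mod_cast sum_card_nbhd_le hE) (by linarith)
      _ = 12 * D * E.card := by ring
  rw [← sum_add_sum_compl H] at hcount
  nlinarith

lemma exists_mem_card_sdiff_pairNbhd_self_le (hE : IsUniform3 E) {L : ℕ} {q : ℝ}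
    (hL : 1 ≤ (L : ℝ)) (hq : 16 * L ≤ q) (hEq : (E.card : ℝ) ≤ 2 * q * L) {H A S : Finset V}
    (hH : ∀ v ∉ H, (deg E v : ℝ) ≤ q / L) (hA : ∀ a ∈ A, (nbhd E a ∩ H).card ≤ 1)
    (hgood : ∀ a ∈ A, ∀ b ∈ A, a ≠ b → ¬ Adj E a b → GoodPair E a b)
    (hAq : 13 * q ≤ A.card) (hSA : ((S \ A).card : ℝ) ≤ 6 * q) :
    ∃ m ∈ H, ((S \ pairNbhd E m m).card : ℝ) ≤ 20 * q := by
  have hD0 : 0 ≤ q / L := div_nonneg (by linarith) (by linarith)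
  have hbig : (A.card : ℝ) + 9 * E.card + 12 * (q / L) * E.card < 2 * q * A.card := by
    have h12 : 12 * (q / L) * E.card ≤ 24 * q ^ 2 := by
      calc 12 * (q / L) * E.card ≤ 12 * (q / L) * (2 * q * L) := by gcongr
        _ = 24 * q ^ 2 := by field_simp; ring
    nlinarith
  obtain ⟨m, hmH, hm⟩ := exists_card_lt_card_nbhd_inter_add hE hgood hA hD0 hH (by linarith) hbig
  refine ⟨m, hmH, ?_⟩
  have hsplit : ((A \ nbhd E m).card : ℝ) + (nbhd E m ∩ A).card = A.card := by
    rw [inter_comm]; exact_mod_cast card_sdiff_add_card_inter A (nbhd E m)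
  have hcard : (S \ pairNbhd E m m).card ≤ 1 + ((S \ A).card + (A \ nbhd E m).card) :=
    (card_le_card (sdiff_pairNbhd_self_subset S A m)).trans
      ((card_insert_le _ _).trans (by rw [add_comm]; exact add_le_add_right (card_union_le _ _) 1))
  calc ((S \ pairNbhd E m m).card : ℝ) ≤ 1 + ((S \ A).card + (A \ nbhd E m).card) := by
        exact_mod_cast hcard
    _ ≤ 20 * q := by linarith

theorem exists_card_sdiff_pairNbhd_le [Nonempty V] (hs : IsSat3 E) {L : ℕ} {q : ℝ}
    (hL : 0 < L) (hq : 16 * L ≤ q) (hE : (E.card : ℝ) ≤ 2 * q * L) {H S : Finset V}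
    (hH : ∀ v ∉ H, (deg E v : ℝ) ≤ q / L) (hS : ∀ v ∈ S, (nbhd E v ∩ H).card ≤ 1) :
    ∃ x y, (H.Nonempty → x ∈ H) ∧ ((S \ pairNbhd E x y).card : ℝ) ≤ 20 * q := by
  have hL1 : (1 : ℝ) ≤ L := by exact_mod_cast hL
  obtain ⟨x₀, hx₀⟩ : ∃ x, H.Nonempty → x ∈ H := by
    by_cases h : H.Nonempty
    · exact ⟨h.choose, fun _ => h.choose_spec⟩
    · exact ⟨Classical.arbitrary V, fun h' => absurd h' h⟩
  by_cases hsmall : (S.card : ℝ) ≤ 19 * q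
  · refine ⟨x₀, x₀, hx₀, ?_⟩
    calc ((S \ pairNbhd E x₀ x₀).card : ℝ) ≤ S.card := by exact_mod_cast card_le_card sdiff_subset
      _ ≤ 20 * q := by linarith
  set S₀ := S.filter fun v => deg E v ≤ L
  have hS₁ : ((S \ S₀).card : ℝ) ≤ 6 * q := by
    have : (((S \ S₀).card * L : ℕ) : ℝ) ≤ ((3 * E.card : ℕ) : ℝ) := by
      refine Nat.cast_le.2 (card_mul_le_of_lt_deg hs.1 fun v hv => ?_)
      obtain ⟨hvS, hvS₀⟩ := mem_sdiff.1 hv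
      simp only [S₀, mem_filter, not_and, not_le] at hvS₀
      exact hvS₀ hvS
    push_cast at this
    nlinarith
  have hS₀ : 13 * q ≤ (S₀.card : ℝ) := by
    have : ((S \ S₀).card : ℝ) + S₀.card = S.card := by
      exact_mod_cast card_sdiff_add_card_eq_card (filter_subset _ S)
    linarith
  by_cases hbad : ∃ u ∈ S₀, ∃ v ∈ S₀, u ≠ v ∧ ¬ Adj E u v ∧ ¬ GoodPair E u v
  · obtain ⟨u, hu, v, hv, huv, hadj, hgood⟩ := hbad
    rw [mem_filter] at hu hv
    obtain ⟨x, y, hx, hxy⟩ := hs.exists_card_compl_pairNbhd_le huv hadj hgood hu.2 hv.2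
      (hS u hu.1) (hS v hv.1) (div_nonneg (by linarith) (by linarith)) hH hx₀
    refine ⟨x, y, hx, ?_⟩
    calc ((S \ pairNbhd E x y).card : ℝ) ≤ (pairNbhd E x y)ᶜ.card := by
          exact_mod_cast card_le_card fun z hz => mem_compl.2 (mem_sdiff.1 hz).2
      _ ≤ 4 + 8 * L * (q / L) := hxy
      _ ≤ 20 * q := by rw [mul_assoc, mul_div_cancel₀ _ (by linarith)]; linarith
  push Not at hbad
  obtain ⟨m, hmH, hm⟩ := exists_mem_card_sdiff_pairNbhd_self_le hs.1 hL1 hq hE hH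
    (fun a ha => hS a (mem_filter.1 ha).1) hbad hS₀ hS₁
  exact ⟨m, m, fun _ => hmH, hm⟩

/-- `H` cannot be empty: otherwise `S` is everything while `N({x, y})` has fewer than
`4n/L²` vertices. -/
theorem exists_mem_card_sdiff_pairNbhd_le (hs : IsSat3 E) {n L : ℕ}
    (hV : Fintype.card V = n) (hE : E.card ≤ 2 * n) (hL : 21 ≤ L) (hn : 16 * L ^ 2 ≤ n)
    {H S : Finset V} (hH : ∀ v ∉ H, (deg E v : ℝ) < n / L ^ 2)
    (hS : ∀ v ∈ S, (nbhd E v ∩ H).card ≤ 1) (hHS : H = ∅ → S = univ) :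
    ∃ x ∈ H, ∃ y, ((S \ pairNbhd E x y).card : ℝ) ≤ 20 * n / L := by
  have hL0 : (21 : ℝ) ≤ L := by exact_mod_cast hL
  have hnq : (n : ℝ) = n / L * L := by field_simp
  have hq : 16 * (L : ℝ) ≤ n / L := by
    rw [le_div_iff₀ (by linarith)]; exact_mod_cast (by nlinarith : 16 * L * L ≤ n)
  have hDq : (n : ℝ) / L ^ 2 = n / L / L := by rw [div_div, sq]
  have : Nonempty V := Fintype.card_pos_iff.1 (by nlinarith)
  obtain ⟨x, y, hx, hxy⟩ := exists_card_sdiff_pairNbhd_le hs (by omega) hq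
    (by rw [mul_assoc, ← hnq]; exact_mod_cast hE) (fun v hv => hDq ▸ (hH v hv).le) hS
  rw [mul_div_assoc]
  obtain rfl | hne := H.eq_empty_or_nonempty
  · have hcompl := card_compl_pairNbhd_ge hs.1 (fun v => hDq ▸ (hH v (notMem_empty v)).le) x y
    rw [hHS rfl, ← compl_eq_univ_sdiff] at hxy
    rw [hV] at hcompl
    have hDL : (n : ℝ) / L / L ≤ n / L / 21 :=
      div_le_div_of_nonneg_left (by linarith) (by norm_num) hL0
    nlinarith
  · exact ⟨x, hx hne, y, hxy⟩

end

lemma eventually_mul_sq_le (ℓ : ℕ → ℕ)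
    (hsmall : Filter.Tendsto (fun n => (ℓ n : ℝ) ^ 3 / n) Filter.atTop (nhds 0)) (c : ℕ) :
    ∀ᶠ n in Filter.atTop, c * ℓ n ^ 2 ≤ n := by
  filter_upwards [hsmall.eventually (gt_mem_nhds (by positivity : (0 : ℝ) < 1 / (c + 1))),
    Filter.eventually_gt_atTop 0] with n hlt hn
  have hn' : (0 : ℝ) < n := by exact_mod_cast hn
  rw [div_lt_div_iff₀ hn' (by positivity), one_mul] at hlt
  have hlt' : ℓ n ^ 3 * (c + 1) < n := by exact_mod_cast hlt
  have hsq : ℓ n ^ 2 ≤ ℓ n ^ 3 := by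
    rcases (ℓ n).eq_zero_or_pos with h | h
    · simp [h]
    · exact Nat.pow_le_pow_right h (by norm_num)
  nlinarith

theorem exists_x_y_covering_general (ℓ : ℕ → ℕ)
    (htop : Filter.Tendsto ℓ Filter.atTop Filter.atTop)
    (hsmall : Filter.Tendsto (fun n => ((ℓ n : ℝ)) ^ 3 / n) Filter.atTop (nhds 0)) :
    ∃ n₀ : ℕ, ∀ n : ℕ, n₀ ≤ n → ∀ E : Finset (Finset (Fin n)),
      IsSat3 E → E.card ≤ 2 * n →
      ∀ H Q S : Set (Fin n),
        H = {v : Fin n | (n : ℝ) / (ℓ n : ℝ) ^ 2 ≤ (deg E v : ℝ)} →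
        Q = {v : Fin n | ∃ u₁ ∈ H, ∃ u₂ ∈ H, u₁ ≠ u₂ ∧ Adj E v u₁ ∧ Adj E v u₂} →
        S = Set.univ \ (Q ∪ H) →
        ∃ x y : Fin n, x ∈ H ∧
          (((S \ {u : Fin n | u ∉ ({x, y} : Set (Fin n)) ∧
              ∃ e ∈ E, u ∈ e ∧ (x ∈ e ∨ y ∈ e)}).ncard : ℝ) ≤ 20 * n / (ℓ n : ℝ)) := by
  obtain ⟨n₀, hn₀⟩ := Filter.eventually_atTop.1
    ((htop.eventually_ge_atTop 21).and (eventually_mul_sq_le ℓ hsmall 16))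
  refine ⟨n₀, fun n hn E hs hE H Q S hH hQ hS => ?_⟩
  classical
  obtain ⟨hL, hLn⟩ := hn₀ n hn
  set Hf := univ.filter fun v : Fin n => (n : ℝ) / (ℓ n : ℝ) ^ 2 ≤ deg E v
  have hHf : (Hf : Set (Fin n)) = H := by rw [hH, coe_filter_univ]
  have hHf' : ∀ v, v ∈ Hf ↔ v ∈ H := fun v => by rw [← mem_coe, hHf]
  have hSH : ∀ v ∈ S, (nbhd E v ∩ Hf).card ≤ 1 := by
    intro v hv
    refine card_le_one.2 fun a ha b hb => by_contra fun hab => ?_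
    rw [mem_inter, hHf', mem_nbhd_iff_adj] at ha hb
    exact (hS ▸ hv).2 (Or.inl (hQ ▸ ⟨a, ha.2, b, hb.2, hab, ha.1, hb.1⟩))
  obtain ⟨x, hx, y, hxy⟩ := exists_mem_card_sdiff_pairNbhd_le hs (Fintype.card_fin n) hE hL hLn
    (H := Hf) (S := univ.filter (· ∈ S)) (fun v hv => by simpa [Hf] using hv)
    (fun v hv => hSH v (mem_filter.1 hv).2) fun hempty => by simp [hS, hQ, ← hHf, hempty]
  refine ⟨x, y, hHf ▸ mem_coe.2 hx, ?_⟩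
  have hSf : ((univ.filter (· ∈ S) : Finset (Fin n)) : Set (Fin n)) = S := by ext; simp
  rwa [← coe_pairNbhd, ← hSf, ← coe_sdiff, Set.ncard_coe_finset]

theorem exists_x_y_covering (ℓ : ℕ → ℕ) (hpos : ∀ n, 0 < ℓ n)
    (htop : Filter.Tendsto ℓ Filter.atTop Filter.atTop)
    (hsmall : Filter.Tendsto (fun n => ((ℓ n : ℝ)) ^ 3 / n) Filter.atTop (nhds 0)) :
    ∃ n₀ : ℕ, ∀ n : ℕ, n₀ ≤ n → ∀ E : Finset (Finset (Fin n)),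
      IsSat3 E → E.card ≤ 2 * n →
      ∀ H Q S : Set (Fin n),
        H = {v : Fin n | (n : ℝ) / (ℓ n : ℝ) ^ 2 ≤ (deg E v : ℝ)} →
        Q = {v : Fin n | ∃ u₁ ∈ H, ∃ u₂ ∈ H, u₁ ≠ u₂ ∧ Adj E v u₁ ∧ Adj E v u₂} →
        S = Set.univ \ (Q ∪ H) →
        ∃ x y : Fin n, x ∈ H ∧
          (((S \ {u : Fin n | u ∉ ({x, y} : Set (Fin n)) ∧
              ∃ e ∈ E, u ∈ e ∧ (x ∈ e ∨ y ∈ e)}).ncard : ℝ) ≤ 20 * n / (ℓ n : ℝ)) :=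
  exists_x_y_covering_general ℓ htop hsmall
end

section
/- Let G be a C_3^{(3)}-saturated 3-uniform hypergraph, let h be a vertex, and let u, u' be distinct vertices different from h with d(u) ≥ 1, d(u') ≥ 1, d(hu) = d(u) and d(hu') = d(u'). Then {h, u, u'} ∈ E(G). -/
open Finset

variable {V : Type*}

/-!
Every edge through `u` or `u'` contains `h`, so every edge meeting the triple `{h, u, u'}`
contains `h`. A copy of `C₃⁽³⁾` created by adding this triple must use it, and then its other
two edges meet it; hence all three edges contain `h`, contradicting that their common
intersection is empty.
-/

section

variable [DecidableEq V] {E : Finset (Finset V)}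

lemma mem_of_codeg_eq_deg {h u : V} (hc : codeg E h u = deg E u) {e : Finset V}
    (he : e ∈ E) (hue : u ∈ e) : h ∈ e := by
  have hsub : E.filter (fun e => h ∈ e ∧ u ∈ e) ⊆ E.filter (fun e => u ∈ e) :=
    fun _ ↦ by simp_all
  have heq := eq_of_subset_of_card_le hsub hc.ge
  have : e ∈ E.filter (fun e => h ∈ e ∧ u ∈ e) := heq ▸ mem_filter.2 ⟨he, hue⟩
  exact (mem_filter.1 this).2.1

lemma not_hasC3_insert {e : Finset V} {h : V} (hfree : ¬ HasC3 E) (hh : h ∈ e)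
    (hE : ∀ f ∈ E, (f ∩ e).Nonempty → h ∈ f) : ¬ HasC3 (insert e E) := by
  rintro ⟨e₁, he₁, e₂, he₂, e₃, he₃, a, b, c, h12, h23, h13, hab, hbc, hac, htri⟩
  have n12 : (e₁ ∩ e₂).Nonempty := h12 ▸ singleton_nonempty a
  have n23 : (e₂ ∩ e₃).Nonempty := h23 ▸ singleton_nonempty b
  have n13 : (e₁ ∩ e₃).Nonempty := h13 ▸ singleton_nonempty c
  have mem_of_meets : ∀ {f}, f ∈ insert e E → (f ∩ e).Nonempty → h ∈ f := fun hf hfe ↦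
    (mem_insert.1 hf).elim (· ▸ hh) (hE _ · hfe)
  by_cases hin : e₁ = e ∨ e₂ = e ∨ e₃ = e
  · have hmem : h ∈ e₁ ∩ e₂ ∩ e₃ := by
      simp only [mem_inter]
      rcases hin with rfl | rfl | rfl
      · exact ⟨⟨hh, mem_of_meets he₂ (by rwa [inter_comm])⟩, mem_of_meets he₃ (by rwa [inter_comm])⟩
      · exact ⟨⟨mem_of_meets he₁ n12, hh⟩, mem_of_meets he₃ (by rwa [inter_comm])⟩
      · exact ⟨⟨mem_of_meets he₁ n13, mem_of_meets he₂ n23⟩, hh⟩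
    simp [htri] at hmem
  · push Not at hin
    exact hfree ⟨e₁, (mem_insert.1 he₁).resolve_left hin.1, e₂,
      (mem_insert.1 he₂).resolve_left hin.2.1, e₃, (mem_insert.1 he₃).resolve_left hin.2.2,
      a, b, c, h12, h23, h13, hab, hbc, hac, htri⟩

end

theorem full_codeg_pair_edge_general {V : Type*} [DecidableEq V]
    (E : Finset (Finset V)) (hsat : IsSat3 E) (h u u' : V)
    (hu : u ≠ h) (hu' : u' ≠ h) (huu' : u ≠ u')
    (hcu : codeg E h u = deg E u) (hcu' : codeg E h u' = deg E u') :
    ({h, u, u'} : Finset V) ∈ E := by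
  by_contra hne
  obtain ⟨-, hfree, hsatur⟩ := hsat
  have hcard : ({h, u, u'} : Finset V).card = 3 :=
    card_eq_three.2 ⟨h, u, u', hu.symm, hu'.symm, huu', rfl⟩
  refine not_hasC3_insert hfree (mem_insert_self h _) ?_ (hsatur _ hcard hne)
  rintro f hf ⟨w, hw⟩
  simp only [mem_inter, mem_insert, mem_singleton] at hw
  rcases hw with ⟨hwf, rfl | rfl | rfl⟩
  · exact hwf
  · exact mem_of_codeg_eq_deg hcu hf hwf
  · exact mem_of_codeg_eq_deg hcu' hf hwf

theorem full_codeg_pair_edge {V : Type*} [DecidableEq V]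
    (E : Finset (Finset V)) (hsat : IsSat3 E) (h u u' : V)
    (hu : u ≠ h) (hu' : u' ≠ h) (huu' : u ≠ u')
    (hdu : 1 ≤ deg E u) (hdu' : 1 ≤ deg E u')
    (hcu : codeg E h u = deg E u) (hcu' : codeg E h u' = deg E u') :
    ({h, u, u'} : Finset V) ∈ E :=
  full_codeg_pair_edge_general E hsat h u u' hu hu' huu' hcu hcu'
end
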